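/- arXiv:1801.03367 — 6 statements merged into one kernel-verified Lean document; each statement's English description precedes it below -/
import Mathlib

section
/- In a finite two-player zero-sum stateless (matrix) game with action sets A1, A2 and utility function v : A1 × A2 → ℝ, the maximin value over mixed strategies equals the minimax value: sup over distributions ς1 on A1 of inf over distributions ς2 on A2 of the expected utility equals inf over ς2 of sup over ς1 of the expected utility. -/
/-!
Weak duality (maximin ≤ minimax) holds for any bounded payoff. For the converse take `c` above the
maximin value and look at the shifted game `v - c`, with matrix `M`. If the compact convex set
`{M q | q mixed}` misses the nonpositive orthant, a separating hyperplane, normalised to a mixed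
strategy `p`, makes every `pᵀ M q` positive, so `p` guarantees more than `c` in the original game,
which is impossible. Hence some mixed `q` has `M q ≤ 0`: it concedes at most `c` against every `p`,
and the minimax value is at most `c`.
-/

open scoped BigOperators

/-- Mixed strategies: probability distributions on a finite action set. -/
def MixedStrat (α : Type) [Fintype α] : Set (α → ℝ) :=
  {p | (∀ a, 0 ≤ p a) ∧ ∑ a, p a = 1}

/-- Expected utility of a mixed strategy pair in a matrix game. -/
noncomputable def expPay {α β : Type} [Fintype α] [Fintype β]
    (v : α → β → ℝ) (p : α → ℝ) (q : β → ℝ) : ℝ :=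
  ∑ a, ∑ b, p a * q b * v a b

/-- Maximin value of a finite zero-sum matrix game over mixed strategies. -/
noncomputable def matVal (α β : Type) [Fintype α] [Fintype β]
    (v : α → β → ℝ) : ℝ :=
  ⨆ p : MixedStrat α, ⨅ q : MixedStrat β, expPay v p.1 q.1

open Set Matrix

section Separation

variable {ι : Type*} [Fintype ι]

lemma inv_sum_smul_mem_stdSimplex {y : ι → ℝ} (hy : 0 < y) :
    (∑ i, y i)⁻¹ • y ∈ stdSimplex ℝ ι := by
  have hsum : 0 < ∑ i, y i := Fintype.sum_pos hy
  refine ⟨fun i => smul_nonneg (inv_nonneg.2 hsum.le) (hy.le i), ?_⟩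
  simp only [Pi.smul_apply, smul_eq_mul, ← Finset.mul_sum, inv_mul_cancel₀ hsum.ne']

lemma exists_nonneg_eq_neg_dotProduct_of_lt_on_Iic (f : (ι → ℝ) →ₗ[ℝ] ℝ) {w : ℝ}
    (hf : ∀ b ∈ Iic (0 : ι → ℝ), w < f b) :
    ∃ y : ι → ℝ, 0 ≤ y ∧ ∀ x, f x = -(y ⬝ᵥ x) := by
  have hw : w < 0 := by simpa using hf 0 (mem_Iic.2 le_rfl)
  have hf_nonneg : ∀ b ≤ 0, 0 ≤ f b := by
    intro b hb
    by_contra! hfb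
    -- rescaling `b` within the cone would bring `f` down to the level `w`
    have := hf ((w / f b) • b)
      (smul_nonpos_of_nonneg_of_nonpos (div_nonneg_of_nonpos hw.le hfb.le) hb)
    rw [map_smul, smul_eq_mul, div_mul_cancel₀ _ hfb.ne] at this
    exact lt_irrefl _ this
  classical
  refine ⟨fun i => -f (Pi.single i 1), fun i => ?_, fun x => ?_⟩
  · simpa using hf_nonneg (-Pi.single i 1) (by simp)
  · conv_lhs => rw [pi_eq_sum_univ' x]
    simp [dotProduct, map_sum, mul_comm]

theorem exists_mem_stdSimplex_forall_dotProduct_pos {C : Set (ι → ℝ)} (hconv : Convex ℝ C)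
    (hcomp : IsCompact C) (hne : C.Nonempty) (hdisj : Disjoint C (Iic 0)) :
    ∃ p ∈ stdSimplex ℝ ι, ∀ x ∈ C, 0 < p ⬝ᵥ x := by
  obtain ⟨f, u, w, hfC, huw, hfK⟩ :=
    geometric_hahn_banach_compact_closed hconv hcomp (convex_Iic 0) isClosed_Iic hdisj
  obtain ⟨y, hy, hfy⟩ := exists_nonneg_eq_neg_dotProduct_of_lt_on_Iic f.toLinearMap hfK
  simp only [ContinuousLinearMap.coe_coe] at hfy
  have hw : w < 0 := by simpa using hfK 0 (mem_Iic.2 le_rfl)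
  have hyC : ∀ x ∈ C, 0 < y ⬝ᵥ x := fun x hx => by linarith [hfC x hx, hfy x]
  obtain ⟨x₀, hx₀⟩ := hne
  have hy_pos : 0 < y := hy.lt_of_ne fun h => by simpa [← h] using hyC x₀ hx₀
  refine ⟨_, inv_sum_smul_mem_stdSimplex hy_pos, fun x hx => ?_⟩
  rw [smul_dotProduct, smul_eq_mul]
  exact mul_pos (inv_pos.2 (Fintype.sum_pos hy_pos)) (hyC x hx)

end Separation

theorem Matrix.exists_forall_dotProduct_mulVec_pos_or_exists_mulVec_nonpos {m n : Type*}
    [Fintype m] [Fintype n] [Nonempty n] (M : Matrix m n ℝ) :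
    (∃ p ∈ stdSimplex ℝ m, ∀ q ∈ stdSimplex ℝ n, 0 < p ⬝ᵥ (M *ᵥ q)) ∨
      ∃ q ∈ stdSimplex ℝ n, M *ᵥ q ≤ 0 := by
  by_cases h : Disjoint (M.mulVecLin '' stdSimplex ℝ n) (Iic 0)
  · left
    obtain ⟨p, hp, hpos⟩ := exists_mem_stdSimplex_forall_dotProduct_pos
      ((convex_stdSimplex ℝ n).linear_image _)
      ((isCompact_stdSimplex ℝ n).image M.mulVecLin.continuous_of_finiteDimensional)
      (Nonempty.of_subtype.image _) h
    exact ⟨p, hp, fun q hq => hpos _ ⟨q, hq, rfl⟩⟩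
  · obtain ⟨_, ⟨q, hq, rfl⟩, hle⟩ := not_disjoint_iff.1 h
    exact Or.inr ⟨q, hq, hle⟩

section MatrixGame

variable {α β : Type} [Fintype α] [Fintype β]

instance [Nonempty α] : Nonempty (MixedStrat α) :=
  inferInstanceAs (Nonempty (stdSimplex ℝ α))

lemma expPay_eq_dotProduct_mulVec (v : α → β → ℝ) (p : α → ℝ) (q : β → ℝ) :
    expPay v p q = p ⬝ᵥ (of v *ᵥ q) := by
  simp only [expPay, dotProduct, mulVec, of_apply, Finset.mul_sum]
  exact Finset.sum_congr rfl fun a _ => Finset.sum_congr rfl fun b _ => by ring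

lemma expPay_sub_const (v : α → β → ℝ) (c : ℝ) {p : α → ℝ} {q : β → ℝ}
    (hp : ∑ a, p a = 1) (hq : ∑ b, q b = 1) :
    expPay (fun a b => v a b - c) p q = expPay v p q - c := by
  simp only [expPay, mul_sub, Finset.sum_sub_distrib, ← Finset.sum_mul, ← Finset.mul_sum, hq,
    hp, mul_one, one_mul]

lemma abs_expPay_le (v : α → β → ℝ) {p : α → ℝ} {q : β → ℝ}
    (hp : p ∈ MixedStrat α) (hq : q ∈ MixedStrat β) :
    |expPay v p q| ≤ ∑ a, ∑ b, |v a b| := by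
  refine (Finset.abs_sum_le_sum_abs _ _).trans (Finset.sum_le_sum fun a _ => ?_)
  refine (Finset.abs_sum_le_sum_abs _ _).trans (Finset.sum_le_sum fun b _ => ?_)
  have hpa := mem_Icc_of_mem_stdSimplex hp a
  have hqb := mem_Icc_of_mem_stdSimplex hq b
  rw [abs_mul, abs_of_nonneg (mul_nonneg hpa.1 hqb.1)]
  exact mul_le_of_le_one_left (abs_nonneg _) (mul_le_one₀ hpa.2 hqb.1 hqb.2)

theorem exists_forall_lt_expPay_or_exists_forall_expPay_le [Nonempty β] (v : α → β → ℝ) (c : ℝ) :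
    (∃ p ∈ MixedStrat α, ∀ q ∈ MixedStrat β, c < expPay v p q) ∨
      ∃ q ∈ MixedStrat β, ∀ p ∈ MixedStrat α, expPay v p q ≤ c := by
  have hshift : ∀ {p q}, p ∈ MixedStrat α → q ∈ MixedStrat β →
      expPay v p q - c = p ⬝ᵥ (of (fun a b => v a b - c) *ᵥ q) := fun hp hq => by
    rw [← expPay_eq_dotProduct_mulVec, expPay_sub_const v c hp.2 hq.2]
  rcases (of fun a b => v a b - c).exists_forall_dotProduct_mulVec_pos_or_exists_mulVec_nonpos
    with ⟨p, hp, hpos⟩ | ⟨q, hq, hnonpos⟩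
  · exact Or.inl ⟨p, hp, fun q hq => sub_pos.1 ((hshift hp hq).symm ▸ hpos q hq)⟩
  · refine Or.inr ⟨q, hq, fun p hp => sub_nonpos.1 ?_⟩
    rw [hshift hp hq]
    simpa using dotProduct_le_dotProduct_of_nonneg_left hnonpos hp.1

variable (v : α → β → ℝ)

lemma bddBelow_range_expPay {p : α → ℝ} (hp : p ∈ MixedStrat α) :
    BddBelow (range fun q : MixedStrat β => expPay v p q.1) :=
  ⟨-∑ a, ∑ b, |v a b|, by rintro _ ⟨q, rfl⟩; exact neg_le_of_abs_le (abs_expPay_le v hp q.2)⟩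

lemma bddAbove_range_expPay {q : β → ℝ} (hq : q ∈ MixedStrat β) :
    BddAbove (range fun p : MixedStrat α => expPay v p.1 q) :=
  ⟨∑ a, ∑ b, |v a b|, by rintro _ ⟨p, rfl⟩; exact le_of_abs_le (abs_expPay_le v p.2 hq)⟩

lemma matVal_le_iInf_iSup [Nonempty α] [Nonempty β] :
    matVal α β v ≤ ⨅ q : MixedStrat β, ⨆ p : MixedStrat α, expPay v p.1 q.1 :=
  le_ciInf fun q => ciSup_le fun p =>
    (ciInf_le (bddBelow_range_expPay v p.2) q).trans (le_ciSup (bddAbove_range_expPay v q.2) p)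

lemma le_matVal [Nonempty β] {p : α → ℝ} (hp : p ∈ MixedStrat α) {c : ℝ}
    (h : ∀ q ∈ MixedStrat β, c ≤ expPay v p q) : c ≤ matVal α β v := by
  obtain ⟨q₀⟩ : Nonempty (MixedStrat β) := inferInstance
  have hbdd : BddAbove (range fun p : MixedStrat α => ⨅ q : MixedStrat β, expPay v p.1 q.1) := by
    refine ⟨∑ a, ∑ b, |v a b|, ?_⟩
    rintro _ ⟨p', rfl⟩
    exact (ciInf_le (bddBelow_range_expPay v p'.2) q₀).trans
      (le_of_abs_le (abs_expPay_le v p'.2 q₀.2))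
  exact (le_ciInf fun q : MixedStrat β => h q.1 q.2).trans (le_ciSup hbdd ⟨p, hp⟩)

lemma iInf_iSup_expPay_le [Nonempty α] {q : β → ℝ} (hq : q ∈ MixedStrat β) {c : ℝ}
    (h : ∀ p ∈ MixedStrat α, expPay v p q ≤ c) :
    ⨅ q : MixedStrat β, ⨆ p : MixedStrat α, expPay v p.1 q.1 ≤ c := by
  obtain ⟨p₀⟩ : Nonempty (MixedStrat α) := inferInstance
  have hbdd : BddBelow (range fun q : MixedStrat β => ⨆ p : MixedStrat α, expPay v p.1 q.1) := by
    refine ⟨-∑ a, ∑ b, |v a b|, ?_⟩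
    rintro _ ⟨q', rfl⟩
    exact (neg_le_of_abs_le (abs_expPay_le v p₀.2 q'.2)).trans
      (le_ciSup (bddAbove_range_expPay v q'.2) p₀)
  exact (ciInf_le hbdd ⟨q, hq⟩).trans (ciSup_le fun p => h p.1 p.2)

end MatrixGame

/-- Von Neumann minimax theorem for finite matrix games:
the maximin value over mixed strategies equals the minimax value. -/
theorem minimax_theorem (α β : Type) [Fintype α] [Fintype β]
    [Nonempty α] [Nonempty β] (v : α → β → ℝ) :
    matVal α β v = ⨅ q : MixedStrat β, ⨆ p : MixedStrat α, expPay v p.1 q.1 := by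
  refine le_antisymm (matVal_le_iInf_iSup v) (le_of_forall_gt_imp_ge_of_dense fun c hc => ?_)
  rcases exists_forall_lt_expPay_or_exists_forall_expPay_le v c with ⟨p, hp, hlt⟩ | ⟨q, hq, hle⟩
  · exact absurd (le_matVal v hp fun q hq => (hlt q hq).le) hc.not_ge
  · exact iInf_iSup_expPay_le v hq hle
end

section
/- Soundness of lower/upper game abstraction: Let (G, u) be a finite concurrent two-player zero-sum game and Π a partition of its state space such that any two states in the same partition set have identical available-action sets for both players. Let (G↓, u↓) and (G↑, u↑) be the lower and upper abstractions of (G, u) with respect to Π. Then for every L ∈ ℕ: υ_{2L}(G↓, u↓) ≤ υ_L(G, u) ≤ υ_{2L}(G↑, u↑). -/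
open scoped BigOperators

/-- A finite concurrent two-player game structure `(S, s0, A, Γ1, Γ2, δ)`. -/
structure ConcGame where
  S : Type
  A : Type
  [fS : Fintype S]
  [dS : DecidableEq S]
  [fA : Fintype A]
  [dA : DecidableEq A]
  s0 : S
  act1 : S → Finset A
  act2 : S → Finset A
  h1 : ∀ s, (act1 s).Nonempty
  h2 : ∀ s, (act2 s).Nonempty
  tr : S → A → A → S

attribute [instance] ConcGame.fS ConcGame.dS ConcGame.fA ConcGame.dA

/-- A history: a finite sequence of (state, action pair) tuples. -/
abbrev Hist (G : ConcGame) := List (G.S × G.A × G.A)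

/-- Mixed (history-dependent) strategies for available-action map `act`:
after every history and at every state, a probability distribution
supported on the available actions. -/
def Strat (G : ConcGame) (act : G.S → Finset G.A) : Set (Hist G → G.S → G.A → ℝ) :=
  {σ | ∀ h s, (∀ a, 0 ≤ σ h s a) ∧ (∑ a ∈ act s, σ h s a = 1) ∧
        ∀ a ∉ act s, σ h s a = 0}

/-- Expected cumulative `L`-step utility of the mixed strategy profile `(σ1, σ2)`
starting at state `s` with current history `h`. -/
noncomputable def expVal (G : ConcGame) (u : G.S → ℝ)
    (σ1 σ2 : Hist G → G.S → G.A → ℝ) : ℕ → G.S → Hist G → ℝ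
  | 0, _, _ => 0
  | (L + 1), s, h =>
      u s + ∑ a1 ∈ G.act1 s, ∑ a2 ∈ G.act2 s,
        σ1 h s a1 * σ2 h s a2 *
          expVal G u σ1 σ2 L (G.tr s a1 a2) (h ++ [(s, a1, a2)])

/-- The `L`-step finite-horizon value of the game started at state `s`:
`sup` over player-1 mixed strategies of `inf` over player-2 mixed strategies
of the expected cumulative utility. -/
noncomputable def valFrom (G : ConcGame) (u : G.S → ℝ) (L : ℕ) (s : G.S) : ℝ :=
  ⨆ σ1 : Strat G G.act1, ⨅ σ2 : Strat G G.act2, expVal G u σ1.1 σ2.1 L s []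

/-- The `L`-step finite-horizon value `υ_L(G, u)` of the game. -/
noncomputable def gval (G : ConcGame) (u : G.S → ℝ) (L : ℕ) : ℝ :=
  valFrom G u L G.s0

/-- The partition induced by a setoid is compatible with the game's action sets:
equivalent states have identical available-action sets for both players. -/
def Compatible (G : ConcGame) (r : Setoid G.S) : Prop :=
  ∀ s s', r.r s s' → G.act1 s = G.act1 s' ∧ G.act2 s = G.act2 s'

section Abstraction

open Classical

variable (G : ConcGame) (r : Setoid G.S)

/-- The partition class (as a set of original states) of an abstract state `q`. -/
def classOf (q : Quotient r) : Set G.S := {s | Quotient.mk r s = q}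

/-- State space of the abstracted games: partition classes plus dummy states
`(class, action, action)`. -/
abbrev AbsS := Quotient r ⊕ (Quotient r × G.A × G.A)

/-- Action space of the abstracted games: original actions, plus choices of a
successor class at dummy states. -/
abbrev AbsA := G.A ⊕ Quotient r

/-- The finset of successor classes reachable from some state of class `π`
under the action pair `(a1, a2)` (the set `X_d` for dummy state `d = (π,a1,a2)`). -/
noncomputable def succClasses (π : Quotient r) (a1 a2 : G.A) : Finset (Quotient r) :=
  letI : DecidableEq (Quotient r) := Classical.decEq _
  letI : Fintype (Quotient r) := Fintype.ofFinite _
  (Finset.univ.filter (fun s => Quotient.mk r s = π)).image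
    (fun s => Quotient.mk r (G.tr s a1 a2))

lemma succClasses_nonempty (π : Quotient r) (a1 a2 : G.A) :
    (succClasses G r π a1 a2).Nonempty := by
  classical
  refine ⟨Quotient.mk r (G.tr (Quotient.out π) a1 a2), ?_⟩
  unfold succClasses
  simp only [Finset.mem_image, Finset.mem_filter, Finset.mem_univ, true_and]
  exact ⟨Quotient.out π, Quotient.out_eq π, rfl⟩

/-- The lower abstraction `G↓` of `G` with respect to the partition induced by `r`:
transitions from a class go to the corresponding dummy state, and at dummy states
player 2 (the minimizer) alone chooses the successor class. -/
noncomputable def lowerAbs : ConcGame :=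
  letI : DecidableEq (Quotient r) := Classical.decEq _
  letI : Fintype (Quotient r) := Fintype.ofFinite _
  { S := AbsS G r
    A := AbsA G r
    s0 := Sum.inl (Quotient.mk r G.s0)
    act1 := fun s => match s with
      | Sum.inl q => (G.act1 (Quotient.out q)).image Sum.inl
      | Sum.inr d => {Sum.inr d.1}
    act2 := fun s => match s with
      | Sum.inl q => (G.act2 (Quotient.out q)).image Sum.inl
      | Sum.inr d => (succClasses G r d.1 d.2.1 d.2.2).image Sum.inr
    h1 := by
      rintro (q | d)
      · exact (G.h1 _).image _
      · exact Finset.singleton_nonempty _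
    h2 := by
      rintro (q | d)
      · exact (G.h2 _).image _
      · exact (succClasses_nonempty G r d.1 d.2.1 d.2.2).image _
    tr := fun s a1 a2 => match s, a1, a2 with
      | Sum.inl q, Sum.inl b1, Sum.inl b2 => Sum.inr (q, b1, b2)
      | Sum.inl q, _, _ => Sum.inl q
      | Sum.inr d, _, Sum.inr π' => Sum.inl π'
      | Sum.inr d, _, _ => Sum.inl d.1 }

/-- The upper abstraction `G↑` of `G` with respect to the partition induced by `r`:
transitions from a class go to the corresponding dummy state, and at dummy states
player 1 (the maximizer) alone chooses the successor class. -/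
noncomputable def upperAbs : ConcGame :=
  letI : DecidableEq (Quotient r) := Classical.decEq _
  letI : Fintype (Quotient r) := Fintype.ofFinite _
  { S := AbsS G r
    A := AbsA G r
    s0 := Sum.inl (Quotient.mk r G.s0)
    act1 := fun s => match s with
      | Sum.inl q => (G.act1 (Quotient.out q)).image Sum.inl
      | Sum.inr d => (succClasses G r d.1 d.2.1 d.2.2).image Sum.inr
    act2 := fun s => match s with
      | Sum.inl q => (G.act2 (Quotient.out q)).image Sum.inl
      | Sum.inr d => {Sum.inr d.1}
    h1 := by
      rintro (q | d)
      · exact (G.h1 _).image _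
      · exact (succClasses_nonempty G r d.1 d.2.1 d.2.2).image _
    h2 := by
      rintro (q | d)
      · exact (G.h2 _).image _
      · exact Finset.singleton_nonempty _
    tr := fun s a1 a2 => match s, a1, a2 with
      | Sum.inl q, Sum.inl b1, Sum.inl b2 => Sum.inr (q, b1, b2)
      | Sum.inl q, _, _ => Sum.inl q
      | Sum.inr d, Sum.inr π', _ => Sum.inl π'
      | Sum.inr d, _, _ => Sum.inl d.1 }

/-- Lower abstract utility: minimum of `u` over the class, `0` at dummy states. -/
noncomputable def lowerU (u : G.S → ℝ) : AbsS G r → ℝ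
  | Sum.inl q => sInf (u '' classOf G r q)
  | Sum.inr _ => 0

/-- Upper abstract utility: maximum of `u` over the class, `0` at dummy states. -/
noncomputable def upperU (u : G.S → ℝ) : AbsS G r → ℝ
  | Sum.inl q => sSup (u '' classOf G r q)
  | Sum.inr _ => 0

end Abstraction

/-!
Each abstract game is played against the concrete one by a coupling of strategies. A strategy
of the player who does not control dummy states in `G↓` (resp. `G↑`) is restricted to `G` by
feeding it the abstract encoding of the concrete history, in which every concrete move becomes a
class move followed by a dummy move. Conversely, a concrete strategy of the other player is lifted
to the abstract game: it replays the abstract history on `G` to recover the concrete state and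
history, plays the concrete strategy there (compatibility of the partition makes the action sets
agree) and, at a dummy state, chooses the class of the true concrete successor. Along coupled
plays two abstract steps track one concrete step, class utilities bound `u` from below (resp.
above) and dummy states pay `0`, so by induction on the horizon the expected payoffs compare.
Taking the infimum over counter-strategies and the supremum over strategies gives both bounds.
-/

def IsDistribOn {α : Type*} (t : Finset α) (p : α → ℝ) : Prop :=
  (∀ a, 0 ≤ p a) ∧ ∑ a ∈ t, p a = 1 ∧ ∀ a ∉ t, p a = 0

namespace IsDistribOn

variable {α β : Type*} {t : Finset α} {p : α → ℝ}

theorem single [DecidableEq α] {b : α} (hb : b ∈ t) : IsDistribOn t (Pi.single b 1) := by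
  refine ⟨fun a => ?_, ?_, fun a ha => Pi.single_eq_of_ne (ne_of_mem_of_not_mem hb ha).symm 1⟩
  · by_cases hab : a = b
    · simp [hab]
    · simp [Pi.single_eq_of_ne hab]
  · rw [Finset.sum_pi_single', if_pos hb]

theorem mem_of_eq_one (hp : IsDistribOn t p) {b : α} (hb : p b = 1) : b ∈ t := by
  by_contra hbt
  simp [hp.2.2 b hbt] at hb

theorem eq_zero_of_eq_one (hp : IsDistribOn t p) {a b : α} (hb : p b = 1) (hab : a ≠ b) :
    p a = 0 := by
  classical
  by_cases hat : a ∈ t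
  · have hsub : {a, b} ⊆ t :=
      Finset.insert_subset hat (Finset.singleton_subset_iff.2 (hp.mem_of_eq_one hb))
    have := Finset.sum_le_sum_of_subset_of_nonneg hsub fun x _ _ => hp.1 x
    rw [Finset.sum_pair hab, hb, hp.2.1] at this
    linarith [hp.1 a]
  · exact hp.2.2 a hat

theorem eq_one_of_eq_singleton {b : α} (hp : IsDistribOn {b} p) : p b = 1 := by
  simpa using hp.2.1

theorem comp_of_image [DecidableEq β] {f : α → β} (hf : Function.Injective f) {p : β → ℝ}
    (hp : IsDistribOn (t.image f) p) : IsDistribOn t (p ∘ f) :=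
  ⟨fun a => hp.1 (f a), (Finset.sum_image hf.injOn).symm.trans hp.2.1,
    fun a ha => hp.2.2 (f a) (by rwa [hf.mem_finset_image])⟩

theorem image_of_comp [DecidableEq β] {f : α → β} (hf : Function.Injective f) {p : β → ℝ}
    (hp : IsDistribOn t (p ∘ f)) (hp0 : ∀ b ∉ Set.range f, p b = 0) :
    IsDistribOn (t.image f) p := by
  refine ⟨fun b => ?_, by rw [Finset.sum_image hf.injOn]; exact hp.2.1, fun b hb => ?_⟩
  · by_cases hbf : b ∈ Set.range f
    · obtain ⟨a, rfl⟩ := hbf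
      exact hp.1 a
    · exact (hp0 b hbf).ge
  · by_cases hbf : b ∈ Set.range f
    · obtain ⟨a, rfl⟩ := hbf
      exact hp.2.2 a fun ha => hb (Finset.mem_image_of_mem f ha)
    · exact hp0 b hbf

theorem abs_sum_mul_le {x : α → ℝ} {B : ℝ} (hp : IsDistribOn t p) (hx : ∀ a ∈ t, |x a| ≤ B) :
    |∑ a ∈ t, p a * x a| ≤ B :=
  calc |∑ a ∈ t, p a * x a| ≤ ∑ a ∈ t, p a * B := by
        refine (Finset.abs_sum_le_sum_abs _ _).trans (Finset.sum_le_sum fun a ha => ?_)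
        rw [abs_mul, abs_of_nonneg (hp.1 a)]
        exact mul_le_mul_of_nonneg_left (hx a ha) (hp.1 a)
    _ = B := by rw [← Finset.sum_mul, hp.2.1, one_mul]

end IsDistribOn

theorem ciSup_ciInf_le_ciSup_ciInf {α₁ α₂ β₁ β₂ : Type*} [Nonempty α₁] [Nonempty β₂]
    {f : α₁ → α₂ → ℝ} {g : β₁ → β₂ → ℝ} {C D : ℝ} (hf : ∀ a b, |f a b| ≤ C)
    (hg : ∀ a b, |g a b| ≤ D) (φ : α₁ → β₁) (ψ : β₂ → α₂) (hfg : ∀ a b, f a (ψ b) ≤ g (φ a) b) :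
    ⨆ a, ⨅ b, f a b ≤ ⨆ a, ⨅ b, g a b := by
  have hf_bdd (a : α₁) : BddBelow (Set.range (f a)) :=
    ⟨-C, Set.forall_mem_range.2 fun b => neg_le_of_abs_le (hf a b)⟩
  have hg_bdd (a : β₁) : BddBelow (Set.range (g a)) :=
    ⟨-D, Set.forall_mem_range.2 fun b => neg_le_of_abs_le (hg a b)⟩
  have hinf_bdd : BddAbove (Set.range fun a => ⨅ b, g a b) :=
    ⟨D, Set.forall_mem_range.2 fun a =>
      (ciInf_le (hg_bdd a) (Classical.arbitrary β₂)).trans (le_of_abs_le (hg _ _))⟩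
  refine ciSup_le fun a => le_trans ?_ (le_ciSup hinf_bdd (φ a))
  exact le_ciInf fun b => (ciInf_le (hf_bdd a) (ψ b)).trans (hfg a b)

section Strategies

variable {G : ConcGame} {u : G.S → ℝ}

theorem isDistribOn_of_mem_strat {act : G.S → Finset G.A} {σ : Hist G → G.S → G.A → ℝ}
    (hσ : σ ∈ Strat G act) (h : Hist G) (s : G.S) : IsDistribOn (act s) (σ h s) :=
  hσ h s

theorem nonempty_strat {act : G.S → Finset G.A} (hne : ∀ s, (act s).Nonempty) :
    Nonempty (Strat G act) :=
  ⟨⟨fun _ s => Pi.single (hne s).choose 1, fun _ s => IsDistribOn.single (hne s).choose_spec⟩⟩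

instance : Nonempty (Strat G G.act1) := nonempty_strat G.h1

instance : Nonempty (Strat G G.act2) := nonempty_strat G.h2

theorem expVal_succ (σ1 σ2 : Hist G → G.S → G.A → ℝ) (L : ℕ) (s : G.S) (h : Hist G) :
    expVal G u σ1 σ2 (L + 1) s h =
      u s + ∑ a1 ∈ G.act1 s, σ1 h s a1 * ∑ a2 ∈ G.act2 s, σ2 h s a2 *
        expVal G u σ1 σ2 L (G.tr s a1 a2) (h ++ [(s, a1, a2)]) := by
  simp only [expVal, mul_assoc, Finset.mul_sum]

theorem abs_expVal_le {C : ℝ} (hu : ∀ s, |u s| ≤ C) {σ1 σ2 : Hist G → G.S → G.A → ℝ}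
    (hσ1 : σ1 ∈ Strat G G.act1) (hσ2 : σ2 ∈ Strat G G.act2) (L : ℕ) (s : G.S) (h : Hist G) :
    |expVal G u σ1 σ2 L s h| ≤ L * C := by
  induction L generalizing s h with
  | zero => simp [expVal]
  | succ L ih =>
    rw [expVal_succ, Nat.cast_succ, add_mul, one_mul, add_comm _ C]
    exact (abs_add_le _ _).trans <| add_le_add (hu s) <|
      (isDistribOn_of_mem_strat hσ1 h s).abs_sum_mul_le fun a1 _ =>
        (isDistribOn_of_mem_strat hσ2 h s).abs_sum_mul_le fun a2 _ => ih _ _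

variable (G u) in
theorem exists_abs_expVal_le (L : ℕ) : ∃ C, ∀ σ1 ∈ Strat G G.act1, ∀ σ2 ∈ Strat G G.act2,
    ∀ s h, |expVal G u σ1 σ2 L s h| ≤ C := by
  obtain ⟨C, hC⟩ := (Set.finite_range fun s => |u s|).bddAbove
  exact ⟨L * C, fun σ1 hσ1 σ2 hσ2 => abs_expVal_le (fun s => hC ⟨s, rfl⟩) hσ1 hσ2 L⟩

theorem expVal_succ_of_eq_one {σ1 σ2 : Hist G → G.S → G.A → ℝ}
    (hσ1 : σ1 ∈ Strat G G.act1) (hσ2 : σ2 ∈ Strat G G.act2) {L : ℕ} {s : G.S} {h : Hist G}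
    {b1 b2 : G.A} (hb1 : σ1 h s b1 = 1) (hb2 : σ2 h s b2 = 1) :
    expVal G u σ1 σ2 (L + 1) s h =
      u s + expVal G u σ1 σ2 L (G.tr s b1 b2) (h ++ [(s, b1, b2)]) := by
  have hp1 := isDistribOn_of_mem_strat hσ1 h s
  have hp2 := isDistribOn_of_mem_strat hσ2 h s
  rw [expVal_succ, Finset.sum_eq_single_of_mem b1 (hp1.mem_of_eq_one hb1)
      fun a1 _ ha1 => by rw [hp1.eq_zero_of_eq_one hb1 ha1, zero_mul],
    Finset.sum_eq_single_of_mem b2 (hp2.mem_of_eq_one hb2)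
      fun a2 _ ha2 => by rw [hp2.eq_zero_of_eq_one hb2 ha2, zero_mul],
    hb1, hb2, one_mul, one_mul]

end Strategies

section Simulation

variable {G : ConcGame} {r : Setoid G.S} {u : G.S → ℝ}

variable (G r) in
abbrev AbsHist := List (AbsS G r × AbsA G r × AbsA G r)

noncomputable def classActs (act : G.S → Finset G.A) (q : Quotient r) : Finset (AbsA G r) :=
  letI : DecidableEq (Quotient r) := Classical.decEq _
  (act q.out).image Sum.inl

noncomputable def dummyActs (d : Quotient r × G.A × G.A) : Finset (AbsA G r) :=
  letI : DecidableEq (Quotient r) := Classical.decEq _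
  (succClasses G r d.1 d.2.1 d.2.2).image Sum.inr

theorem sum_classActs_mk {act : G.S → Finset G.A} (hact : ∀ s s', r.r s s' → act s = act s')
    (s : G.S) (f : AbsA G r → ℝ) :
    ∑ b ∈ classActs act (Quotient.mk r s), f b = ∑ a ∈ act s, f (Sum.inl a) := by
  let : DecidableEq (Quotient r) := Classical.decEq _
  rw [classActs, Finset.sum_image Sum.inl_injective.injOn, hact _ _ (Quotient.mk_out s)]

theorem mk_mem_succClasses (s : G.S) (a1 a2 : G.A) :
    Quotient.mk r (G.tr s a1 a2) ∈ succClasses G r (Quotient.mk r s) a1 a2 := by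
  unfold succClasses
  simp only [Finset.mem_image, Finset.mem_filter, Finset.mem_univ, true_and]
  exact ⟨s, rfl, rfl⟩

theorem lowerU_mk_le (s : G.S) : lowerU G r u (Sum.inl (Quotient.mk r s)) ≤ u s :=
  csInf_le (Set.toFinite _).bddBelow ⟨s, rfl, rfl⟩

theorem le_upperU_mk (s : G.S) : u s ≤ upperU G r u (Sum.inl (Quotient.mk r s)) :=
  le_csSup (Set.toFinite _).bddAbove ⟨s, rfl, rfl⟩

def replayStep (p : G.S × Hist G) : AbsS G r × AbsA G r × AbsA G r → G.S × Hist G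
  | (Sum.inl _, Sum.inl a1, Sum.inl a2) => (G.tr p.1 a1 a2, p.2 ++ [(p.1, a1, a2)])
  | _ => p

def replay (hA : AbsHist G r) : G.S × Hist G :=
  hA.foldl replayStep (G.s0, [])

theorem replay_append_inl {hA : AbsHist G r} {s : G.S} {h : Hist G} (hrep : replay hA = (s, h))
    (q : Quotient r) (a1 a2 : G.A) :
    replay (hA ++ [(Sum.inl q, Sum.inl a1, Sum.inl a2)]) = (G.tr s a1 a2, h ++ [(s, a1, a2)]) := by
  rw [replay, List.foldl_append, ← replay, hrep]
  rfl

theorem replay_append_inr (hA : AbsHist G r) (d : Quotient r × G.A × G.A) (b1 b2 : AbsA G r) :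
    replay (hA ++ [(Sum.inr d, b1, b2)]) = replay hA := by
  rw [replay, List.foldl_append, ← replay]
  rfl

/- The next two definitions fall back to an arbitrary valid choice when the abstract history is
not the encoding of a concrete play, so that lifted strategies are strategies everywhere. -/

open Classical in
noncomputable def classRep (hA : AbsHist G r) (q : Quotient r) : G.S :=
  if Quotient.mk r (replay hA).1 = q then (replay hA).1 else q.out

open Classical in
noncomputable def dummyTarget (hA : AbsHist G r) (d : Quotient r × G.A × G.A) : Quotient r :=
  if Quotient.mk r (replay hA).1 ∈ succClasses G r d.1 d.2.1 d.2.2 then Quotient.mk r (replay hA).1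
  else (succClasses_nonempty G r d.1 d.2.1 d.2.2).choose

theorem mk_classRep (hA : AbsHist G r) (q : Quotient r) : Quotient.mk r (classRep hA q) = q := by
  unfold classRep
  split_ifs with hq
  exacts [hq, Quotient.out_eq q]

theorem dummyTarget_mem (hA : AbsHist G r) (d : Quotient r × G.A × G.A) :
    dummyTarget hA d ∈ succClasses G r d.1 d.2.1 d.2.2 := by
  unfold dummyTarget
  split_ifs with hd
  exacts [hd, (succClasses_nonempty G r d.1 d.2.1 d.2.2).choose_spec]

noncomputable def liftStrat (σ : Hist G → G.S → G.A → ℝ) (hA : AbsHist G r) :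
    AbsS G r → AbsA G r → ℝ :=
  letI : DecidableEq (Quotient r) := Classical.decEq _
  fun x b => match x, b with
  | Sum.inl q, Sum.inl a => σ (replay hA).2 (classRep hA q) a
  | Sum.inl _, Sum.inr _ => 0
  | Sum.inr d, b => (Pi.single (Sum.inr (dummyTarget hA d)) 1 : AbsA G r → ℝ) b

def restrictStrat (enc : Hist G → AbsHist G r) (σ : AbsHist G r → AbsS G r → AbsA G r → ℝ) :
    Hist G → G.S → G.A → ℝ :=
  fun h s a => σ (enc h) (Sum.inl (Quotient.mk r s)) (Sum.inl a)

theorem liftStrat_inl_of_replay {σ : Hist G → G.S → G.A → ℝ} {hA : AbsHist G r} {s : G.S}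
    {h : Hist G} (hrep : replay hA = (s, h)) (a : G.A) :
    liftStrat σ hA (Sum.inl (Quotient.mk r s)) (Sum.inl a) = σ h s a := by
  simp [liftStrat, classRep, hrep]

theorem liftStrat_inr_of_replay {σ : Hist G → G.S → G.A → ℝ} {hA : AbsHist G r} {s : G.S}
    {h : Hist G} (hrep : replay hA = (s, h)) (d : Quotient r × G.A × G.A)
    (hs : Quotient.mk r s ∈ succClasses G r d.1 d.2.1 d.2.2) :
    liftStrat σ hA (Sum.inr d) (Sum.inr (Quotient.mk r s)) = 1 := by
  simp [liftStrat, dummyTarget, hrep, hs]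

theorem isDistribOn_liftStrat_inl {act : G.S → Finset G.A}
    (hact : ∀ s s', r.r s s' → act s = act s') {σ : Hist G → G.S → G.A → ℝ}
    (hσ : σ ∈ Strat G act) (hA : AbsHist G r) (q : Quotient r) :
    IsDistribOn (classActs act q) (liftStrat σ hA (Sum.inl q)) := by
  let : DecidableEq (Quotient r) := Classical.decEq _
  have hrep : r.r (classRep hA q) q.out := Quotient.exact (by rw [mk_classRep, Quotient.out_eq])
  refine IsDistribOn.image_of_comp Sum.inl_injective ?_ ?_
  · rw [← hact _ _ hrep]
    exact isDistribOn_of_mem_strat hσ _ _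
  · rintro (a | p) hb
    · exact absurd ⟨a, rfl⟩ hb
    · simp [liftStrat]

theorem isDistribOn_liftStrat_inr (σ : Hist G → G.S → G.A → ℝ) (hA : AbsHist G r)
    (d : Quotient r × G.A × G.A) : IsDistribOn (dummyActs d) (liftStrat σ hA (Sum.inr d)) := by
  let : DecidableEq (Quotient r) := Classical.decEq _
  exact IsDistribOn.single (Finset.mem_image_of_mem Sum.inr (dummyTarget_mem hA d))

theorem restrictStrat_mem {act : G.S → Finset G.A} (hact : ∀ s s', r.r s s' → act s = act s')
    (enc : Hist G → AbsHist G r) {σ : AbsHist G r → AbsS G r → AbsA G r → ℝ}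
    (hσ : ∀ hA q, IsDistribOn (classActs act q) (σ hA (Sum.inl q))) :
    restrictStrat enc σ ∈ Strat G act := by
  intro h s
  let : DecidableEq (Quotient r) := Classical.decEq _
  have := (hσ (enc h) (Quotient.mk r s)).comp_of_image Sum.inl_injective
  rwa [hact _ _ (Quotient.mk_out s)] at this

theorem liftStrat_mem_lowerAbs (hc : Compatible G r) {σ : Hist G → G.S → G.A → ℝ}
    (hσ : σ ∈ Strat G G.act2) : liftStrat σ ∈ Strat (lowerAbs G r) (lowerAbs G r).act2 := by
  rintro hA (q | d)
  exacts [isDistribOn_liftStrat_inl (fun s s' hs => (hc s s' hs).2) hσ hA q,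
    isDistribOn_liftStrat_inr σ hA d]

theorem liftStrat_mem_upperAbs (hc : Compatible G r) {σ : Hist G → G.S → G.A → ℝ}
    (hσ : σ ∈ Strat G G.act1) : liftStrat σ ∈ Strat (upperAbs G r) (upperAbs G r).act1 := by
  rintro hA (q | d)
  exacts [isDistribOn_liftStrat_inl (fun s s' hs => (hc s s' hs).1) hσ hA q,
    isDistribOn_liftStrat_inr σ hA d]

theorem restrictStrat_mem_lowerAbs (hc : Compatible G r) (enc : Hist G → AbsHist G r)
    {σ : AbsHist G r → AbsS G r → AbsA G r → ℝ}
    (hσ : σ ∈ Strat (lowerAbs G r) (lowerAbs G r).act1) : restrictStrat enc σ ∈ Strat G G.act1 :=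
  restrictStrat_mem (fun s s' hs => (hc s s' hs).1) enc fun hA q => hσ hA (Sum.inl q)

theorem restrictStrat_mem_upperAbs (hc : Compatible G r) (enc : Hist G → AbsHist G r)
    {σ : AbsHist G r → AbsS G r → AbsA G r → ℝ}
    (hσ : σ ∈ Strat (upperAbs G r) (upperAbs G r).act2) : restrictStrat enc σ ∈ Strat G G.act2 :=
  restrictStrat_mem (fun s s' hs => (hc s s' hs).2) enc fun hA q => hσ hA (Sum.inl q)

def encode (dummyMoves : G.S × G.A × G.A → AbsA G r × AbsA G r) (h : Hist G) : AbsHist G r :=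
  h.flatMap fun e =>
    [(Sum.inl (Quotient.mk r e.1), Sum.inl e.2.1, Sum.inl e.2.2),
      (Sum.inr (Quotient.mk r e.1, e.2.1, e.2.2), dummyMoves e)]

variable (r) in
def encodeLower : Hist G → AbsHist G r :=
  encode fun e => (Sum.inr (Quotient.mk r e.1), Sum.inr (Quotient.mk r (G.tr e.1 e.2.1 e.2.2)))

variable (r) in
def encodeUpper : Hist G → AbsHist G r :=
  encode fun e => (Sum.inr (Quotient.mk r (G.tr e.1 e.2.1 e.2.2)), Sum.inr (Quotient.mk r e.1))

theorem encode_append_singleton (m : G.S × G.A × G.A → AbsA G r × AbsA G r) (h : Hist G)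
    (s : G.S) (a1 a2 : G.A) :
    encode m (h ++ [(s, a1, a2)]) =
      encode m h ++ [(Sum.inl (Quotient.mk r s), Sum.inl a1, Sum.inl a2)] ++
        [(Sum.inr (Quotient.mk r s, a1, a2), m (s, a1, a2))] := by
  simp [encode]

theorem replay_encode_append {m : G.S × G.A × G.A → AbsA G r × AbsA G r} {h : Hist G}
    {s : G.S} (hrep : replay (encode m h) = (s, h)) (a1 a2 : G.A) :
    replay (encode m (h ++ [(s, a1, a2)])) = (G.tr s a1 a2, h ++ [(s, a1, a2)]) := by
  rw [encode_append_singleton, replay_append_inr, replay_append_inl hrep]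

theorem expVal_lowerAbs_inl (hc : Compatible G r) (v : AbsS G r → ℝ)
    {σ1 σ2 : AbsHist G r → AbsS G r → AbsA G r → ℝ} (n : ℕ) (s : G.S) (hA : AbsHist G r) :
    expVal (lowerAbs G r) v σ1 σ2 (n + 1) (Sum.inl (Quotient.mk r s)) hA =
      v (Sum.inl (Quotient.mk r s)) +
        ∑ a1 ∈ G.act1 s, σ1 hA (Sum.inl (Quotient.mk r s)) (Sum.inl a1) *
          ∑ a2 ∈ G.act2 s, σ2 hA (Sum.inl (Quotient.mk r s)) (Sum.inl a2) *
            expVal (lowerAbs G r) v σ1 σ2 n (Sum.inr (Quotient.mk r s, a1, a2))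
              (hA ++ [(Sum.inl (Quotient.mk r s), Sum.inl a1, Sum.inl a2)]) := by
  refine (expVal_succ _ _ _ _ _).trans (congrArg (_ + ·) ?_)
  refine (sum_classActs_mk (fun s s' hs => (hc s s' hs).1) s _).trans
    (Finset.sum_congr rfl fun a1 _ => congrArg (_ * ·) ?_)
  exact sum_classActs_mk (fun s s' hs => (hc s s' hs).2) s _

theorem expVal_upperAbs_inl (hc : Compatible G r) (v : AbsS G r → ℝ)
    {σ1 σ2 : AbsHist G r → AbsS G r → AbsA G r → ℝ} (n : ℕ) (s : G.S) (hA : AbsHist G r) :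
    expVal (upperAbs G r) v σ1 σ2 (n + 1) (Sum.inl (Quotient.mk r s)) hA =
      v (Sum.inl (Quotient.mk r s)) +
        ∑ a1 ∈ G.act1 s, σ1 hA (Sum.inl (Quotient.mk r s)) (Sum.inl a1) *
          ∑ a2 ∈ G.act2 s, σ2 hA (Sum.inl (Quotient.mk r s)) (Sum.inl a2) *
            expVal (upperAbs G r) v σ1 σ2 n (Sum.inr (Quotient.mk r s, a1, a2))
              (hA ++ [(Sum.inl (Quotient.mk r s), Sum.inl a1, Sum.inl a2)]) := by
  refine (expVal_succ _ _ _ _ _).trans (congrArg (_ + ·) ?_)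
  refine (sum_classActs_mk (fun s s' hs => (hc s s' hs).1) s _).trans
    (Finset.sum_congr rfl fun a1 _ => congrArg (_ * ·) ?_)
  exact sum_classActs_mk (fun s s' hs => (hc s s' hs).2) s _

theorem expVal_lowerAbs_inr {σ1 σ2 : AbsHist G r → AbsS G r → AbsA G r → ℝ}
    (hσ1 : σ1 ∈ Strat (lowerAbs G r) (lowerAbs G r).act1)
    (hσ2 : σ2 ∈ Strat (lowerAbs G r) (lowerAbs G r).act2) {n : ℕ} {hA : AbsHist G r}
    {d : Quotient r × G.A × G.A} {q : Quotient r} (hq : σ2 hA (Sum.inr d) (Sum.inr q) = 1) :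
    expVal (lowerAbs G r) (lowerU G r u) σ1 σ2 (n + 1) (Sum.inr d) hA =
      expVal (lowerAbs G r) (lowerU G r u) σ1 σ2 n (Sum.inl q)
        (hA ++ [(Sum.inr d, Sum.inr d.1, Sum.inr q)]) :=
  (expVal_succ_of_eq_one hσ1 hσ2
    (isDistribOn_of_mem_strat hσ1 hA (Sum.inr d)).eq_one_of_eq_singleton hq).trans (zero_add _)

theorem expVal_upperAbs_inr {σ1 σ2 : AbsHist G r → AbsS G r → AbsA G r → ℝ}
    (hσ1 : σ1 ∈ Strat (upperAbs G r) (upperAbs G r).act1)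
    (hσ2 : σ2 ∈ Strat (upperAbs G r) (upperAbs G r).act2) {n : ℕ} {hA : AbsHist G r}
    {d : Quotient r × G.A × G.A} {q : Quotient r} (hq : σ1 hA (Sum.inr d) (Sum.inr q) = 1) :
    expVal (upperAbs G r) (upperU G r u) σ1 σ2 (n + 1) (Sum.inr d) hA =
      expVal (upperAbs G r) (upperU G r u) σ1 σ2 n (Sum.inl q)
        (hA ++ [(Sum.inr d, Sum.inr q, Sum.inr d.1)]) :=
  (expVal_succ_of_eq_one hσ1 hσ2 hq
    (isDistribOn_of_mem_strat hσ2 hA (Sum.inr d)).eq_one_of_eq_singleton).trans (zero_add _)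
theorem expVal_lowerAbs_le (hc : Compatible G r) {σ1 : AbsHist G r → AbsS G r → AbsA G r → ℝ}
    {σ2 : Hist G → G.S → G.A → ℝ} (hσ1 : σ1 ∈ Strat (lowerAbs G r) (lowerAbs G r).act1)
    (hσ2 : σ2 ∈ Strat G G.act2) (L : ℕ) {s : G.S} {h : Hist G}
    (hrep : replay (encodeLower r h) = (s, h)) :
    expVal (lowerAbs G r) (lowerU G r u) σ1 (liftStrat σ2) (2 * L) (Sum.inl (Quotient.mk r s))
        (encodeLower r h) ≤
      expVal G u (restrictStrat (encodeLower r) σ1) σ2 L s h := by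
  induction L generalizing s h with
  | zero => simp [expVal]
  | succ L ih =>
    rw [show 2 * (L + 1) = 2 * L + 1 + 1 by ring, expVal_lowerAbs_inl hc, expVal_succ]
    refine add_le_add (lowerU_mk_le s) (Finset.sum_le_sum fun a1 _ => ?_)
    refine mul_le_mul_of_nonneg_left (Finset.sum_le_sum fun a2 _ => ?_)
      ((isDistribOn_of_mem_strat hσ1 _ _).1 _)
    rw [liftStrat_inl_of_replay hrep]
    refine mul_le_mul_of_nonneg_left ?_ ((isDistribOn_of_mem_strat hσ2 h s).1 a2)
    have hrep' := replay_append_inl hrep (Quotient.mk r s) a1 a2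
    refine (expVal_lowerAbs_inr hσ1 (liftStrat_mem_lowerAbs hc hσ2)
      (liftStrat_inr_of_replay hrep' _ (mk_mem_succClasses s a1 a2))).trans_le ?_
    have := ih (replay_encode_append hrep a1 a2)
    rwa [encodeLower, encode_append_singleton] at this

theorem expVal_le_upperAbs (hc : Compatible G r) {σ1 : Hist G → G.S → G.A → ℝ}
    {σ2 : AbsHist G r → AbsS G r → AbsA G r → ℝ} (hσ1 : σ1 ∈ Strat G G.act1)
    (hσ2 : σ2 ∈ Strat (upperAbs G r) (upperAbs G r).act2) (L : ℕ) {s : G.S} {h : Hist G}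
    (hrep : replay (encodeUpper r h) = (s, h)) :
    expVal G u σ1 (restrictStrat (encodeUpper r) σ2) L s h ≤
      expVal (upperAbs G r) (upperU G r u) (liftStrat σ1) σ2 (2 * L) (Sum.inl (Quotient.mk r s))
        (encodeUpper r h) := by
  induction L generalizing s h with
  | zero => simp [expVal]
  | succ L ih =>
    rw [show 2 * (L + 1) = 2 * L + 1 + 1 by ring, expVal_upperAbs_inl hc, expVal_succ]
    refine add_le_add (le_upperU_mk s) (Finset.sum_le_sum fun a1 _ => ?_)
    rw [liftStrat_inl_of_replay hrep]
    refine mul_le_mul_of_nonneg_left (Finset.sum_le_sum fun a2 _ => ?_)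
      ((isDistribOn_of_mem_strat hσ1 h s).1 a1)
    refine mul_le_mul_of_nonneg_left ?_ ((isDistribOn_of_mem_strat hσ2 _ _).1 _)
    have hrep' := replay_append_inl hrep (Quotient.mk r s) a1 a2
    refine le_of_le_of_eq ?_ (expVal_upperAbs_inr (liftStrat_mem_upperAbs hc hσ1) hσ2
      (liftStrat_inr_of_replay hrep' _ (mk_mem_succClasses s a1 a2))).symm
    have := ih (replay_encode_append hrep a1 a2)
    rwa [encodeUpper, encode_append_singleton] at this

end Simulation

/-- Soundness of abstraction: for a compatible partition, the `2L`-step value of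
the lower abstraction is a lower bound, and the `2L`-step value of the upper
abstraction an upper bound, on the `L`-step value of the original game. -/
theorem abstraction_soundness (G : ConcGame) (u : G.S → ℝ) (r : Setoid G.S)
    (hc : Compatible G r) (L : ℕ) :
    gval (lowerAbs G r) (lowerU G r u) (2 * L) ≤ gval G u L ∧
    gval G u L ≤ gval (upperAbs G r) (upperU G r u) (2 * L) := by
  obtain ⟨C, hC⟩ := exists_abs_expVal_le G u L
  obtain ⟨C₁, hC₁⟩ := exists_abs_expVal_le (lowerAbs G r) (lowerU G r u) (2 * L)
  obtain ⟨C₂, hC₂⟩ := exists_abs_expVal_le (upperAbs G r) (upperU G r u) (2 * L)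
  constructor
  · exact ciSup_ciInf_le_ciSup_ciInf (fun σ1 σ2 => hC₁ _ σ1.2 _ σ2.2 _ _)
      (fun σ1 σ2 => hC _ σ1.2 _ σ2.2 _ _)
      (fun σ1 => ⟨restrictStrat (encodeLower r) σ1.1, restrictStrat_mem_lowerAbs hc _ σ1.2⟩)
      (fun σ2 => ⟨liftStrat σ2.1, liftStrat_mem_lowerAbs hc σ2.2⟩)
      fun σ1 σ2 => expVal_lowerAbs_le (s := G.s0) (h := []) hc σ1.2 σ2.2 L rfl
  · exact ciSup_ciInf_le_ciSup_ciInf (fun σ1 σ2 => hC _ σ1.2 _ σ2.2 _ _)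
      (fun σ1 σ2 => hC₂ _ σ1.2 _ σ2.2 _ _)
      (fun σ1 => ⟨liftStrat σ1.1, liftStrat_mem_upperAbs hc σ1.2⟩)
      (fun σ2 => ⟨restrictStrat (encodeUpper r) σ2.1, restrictStrat_mem_upperAbs hc _ σ2.2⟩)
      fun σ1 σ2 => expVal_le_upperAbs (s := G.s0) (h := []) hc σ1.2 σ2.2 L rfl
end

section
/- Refinement property of game abstraction: Let (G, u) be a finite concurrent two-player zero-sum game and Π1, Π2 two partitions of its state space compatible with action sets, with Π2 a refinement of Π1 (every set of Π1 is a union of sets of Π2). Let (Gi↓, ui↓), (Gi↑, ui↑) be the lower and upper abstractions with respect to Πi. Then for every L: υ_{2L}(G1↓, u1↓) ≤ υ_{2L}(G2↓, u2↓) ≤ υ_{2L}(G2↑, u2↑) ≤ υ_{2L}(G1↑, u1↑). -/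
open scoped BigOperators

/-!
The `L`-step value equals its backward-induction value `dpVal`: at every stage player 1 has an
optimal mixed action (the stage payoff is continuous on a compact simplex) and player 2 a pure
best response, and playing these stage by stage shows that history-dependent strategies gain
nothing. Backward-induction values are monotone along simulations, relations between states along
which the utility does not decrease, player 1's moves can be copied, and every move of player 2 in
the second game is answered by one in the first. Mapping each class of the finer partition to the
coarser class containing it gives a simulation from the coarse to the fine lower abstraction and
from the fine to the coarse upper abstraction, because a coarser class has a smaller minimum, a
larger maximum and more successor classes; the identity is a simulation from the lower to the
upper abstraction of the same partition.
-/

noncomputable section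

open Finset ConcGame

section distOn

variable {α β : Type*}

def distOn (F : Finset α) : Set (α → ℝ) :=
  {x | (∀ a, 0 ≤ x a) ∧ ∑ a ∈ F, x a = 1 ∧ ∀ a ∉ F, x a = 0}

theorem single_mem_distOn [DecidableEq α] {F : Finset α} {b : α} (hb : b ∈ F) :
    Pi.single b 1 ∈ distOn F := by
  refine ⟨(Pi.single_nonneg.2 zero_le_one : (0 : α → ℝ) ≤ Pi.single b 1), by simp [hb],
    fun a ha => Pi.single_eq_of_ne ?_ _⟩
  rintro rfl
  exact ha hb

theorem distOn_nonempty {F : Finset α} (hF : F.Nonempty) : (distOn F).Nonempty := by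
  classical
  obtain ⟨b, hb⟩ := hF
  exact ⟨_, single_mem_distOn hb⟩

theorem isCompact_distOn [Fintype α] (F : Finset α) : IsCompact (distOn F) := by
  have hF : distOn F = stdSimplex ℝ α ∩ ⋂ (a) (_ : a ∉ F), {x | x a = 0} := by
    ext x
    simp only [distOn, stdSimplex, Set.mem_ofPred_eq, Set.mem_inter_iff, Set.mem_iInter]
    constructor
    · rintro ⟨h0, h1, hout⟩
      refine ⟨⟨h0, ?_⟩, hout⟩
      rw [← h1, ← sum_subset (subset_univ F) fun a _ ha => hout a ha]
    · rintro ⟨⟨h0, h1⟩, hout⟩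
      refine ⟨h0, ?_, hout⟩
      rw [← h1, sum_subset (subset_univ F) fun a _ ha => hout a ha]
  rw [hF]
  exact (isCompact_stdSimplex ℝ α).inter_right <|
    isClosed_iInter fun a => isClosed_iInter fun _ =>
      isClosed_eq (continuous_apply a) continuous_const

variable {F : Finset α} {x : α → ℝ}

theorem le_sum_mul_of_mem_distOn (hx : x ∈ distOn F) {c : α → ℝ} {M : ℝ}
    (hc : ∀ a ∈ F, M ≤ c a) : M ≤ ∑ a ∈ F, x a * c a :=
  calc M = ∑ a ∈ F, x a * M := by rw [← sum_mul, hx.2.1, one_mul]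
    _ ≤ ∑ a ∈ F, x a * c a :=
        sum_le_sum fun a ha => mul_le_mul_of_nonneg_left (hc a ha) (hx.1 a)

theorem exists_mem_distOn_sum_mul_comp {F' : Finset β} {ψ : α → β} (hψ : ∀ a ∈ F, ψ a ∈ F')
    (hx : x ∈ distOn F) :
    ∃ y ∈ distOn F', ∀ c : β → ℝ, ∑ b ∈ F', y b * c b = ∑ a ∈ F, x a * c (ψ a) := by
  classical
  set y : β → ℝ := fun b => ∑ a ∈ F with ψ a = b, x a
  have hy (c : β → ℝ) : ∑ b ∈ F', y b * c b = ∑ a ∈ F, x a * c (ψ a) := by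
    simp only [y, sum_mul]
    rw [← sum_fiberwise_of_maps_to hψ]
    exact sum_congr rfl fun b _ => sum_congr rfl fun a ha => by rw [(mem_filter.mp ha).2]
  refine ⟨y, ⟨fun b => sum_nonneg fun a _ => hx.1 a, ?_, fun b hb => ?_⟩, hy⟩
  · simpa [hx.2.1] using hy 1
  · refine sum_eq_zero fun a ha => absurd ?_ hb
    obtain ⟨haF, rfl⟩ := mem_filter.mp ha
    exact hψ a haF

theorem le_sum_sum_mul_of_mem_distOn {F' : Finset β} {y : β → ℝ} (hx : x ∈ distOn F)
    (hy : y ∈ distOn F') {E : α → β → ℝ} {M : ℝ} (hE : ∀ a ∈ F, ∀ b ∈ F', M ≤ E a b) :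
    M ≤ ∑ a ∈ F, ∑ b ∈ F', x a * y b * E a b := by
  simpa only [mul_assoc, ← mul_sum] using
    le_sum_mul_of_mem_distOn hx fun a ha => le_sum_mul_of_mem_distOn hy (hE a ha)

theorem sum_sum_mul_single [DecidableEq β] {F' : Finset β} {b : β} (hb : b ∈ F')
    (E : α → β → ℝ) :
    ∑ a ∈ F, ∑ b' ∈ F', x a * (Pi.single b 1 : β → ℝ) b' * E a b' =
      ∑ a ∈ F, x a * E a b := by
  simp [Pi.single_apply, hb]

end distOn

namespace ConcGame

variable (G : ConcGame)

/-- Against a fixed mixed action of player 1, a pure answer of player 2 is optimal. -/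
def stageGuarantee (v : G.S → ℝ) (s : G.S) (x : G.A → ℝ) : ℝ :=
  (G.act2 s).inf' (G.h2 s) fun a2 => ∑ a1 ∈ G.act1 s, x a1 * v (G.tr s a1 a2)

def stageVal (v : G.S → ℝ) (s : G.S) : ℝ :=
  ⨆ x : distOn (G.act1 s), G.stageGuarantee v s x

def dpVal (u : G.S → ℝ) : ℕ → G.S → ℝ
  | 0, _ => 0
  | L + 1, s => u s + G.stageVal (dpVal u L) s

variable {G}

theorem continuous_stageGuarantee (v : G.S → ℝ) (s : G.S) :
    Continuous (G.stageGuarantee v s) := by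
  unfold stageGuarantee
  fun_prop

theorem exists_isMaxOn_stageGuarantee (v : G.S → ℝ) (s : G.S) :
    ∃ x ∈ distOn (G.act1 s), IsMaxOn (G.stageGuarantee v s) (distOn (G.act1 s)) x :=
  (isCompact_distOn _).exists_isMaxOn (distOn_nonempty (G.h1 s))
    (continuous_stageGuarantee v s).continuousOn

theorem stageGuarantee_le_stageVal {v : G.S → ℝ} {s : G.S} {x : G.A → ℝ}
    (hx : x ∈ distOn (G.act1 s)) : G.stageGuarantee v s x ≤ G.stageVal v s := by
  obtain ⟨_, -, hmax⟩ := exists_isMaxOn_stageGuarantee v s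
  exact le_ciSup (f := fun y : distOn (G.act1 s) => G.stageGuarantee v s y)
    ⟨_, Set.forall_mem_range.2 fun y => isMaxOn_iff.1 hmax y.1 y.2⟩ ⟨x, hx⟩

theorem exists_stageGuarantee_eq_stageVal (v : G.S → ℝ) (s : G.S) :
    ∃ x ∈ distOn (G.act1 s), G.stageGuarantee v s x = G.stageVal v s := by
  obtain ⟨x, hx, hmax⟩ := exists_isMaxOn_stageGuarantee v s
  have : Nonempty (distOn (G.act1 s)) := ⟨⟨x, hx⟩⟩
  exact ⟨x, hx, le_antisymm (stageGuarantee_le_stageVal hx)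
    (ciSup_le fun y => isMaxOn_iff.1 hmax y.1 y.2)⟩

theorem stageGuarantee_le_sum_sum {v : G.S → ℝ} {s : G.S} (x : G.A → ℝ) {y : G.A → ℝ}
    (hy : y ∈ distOn (G.act2 s)) :
    G.stageGuarantee v s x ≤
      ∑ a1 ∈ G.act1 s, ∑ a2 ∈ G.act2 s, x a1 * y a2 * v (G.tr s a1 a2) := by
  rw [stageGuarantee, sum_comm]
  simpa only [mul_sum, mul_left_comm (y _), mul_assoc] using
    le_sum_mul_of_mem_distOn hy (c := fun a2 => ∑ a1 ∈ G.act1 s, x a1 * v (G.tr s a1 a2))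
      fun a2 ha2 => inf'_le _ ha2

variable {σ1 σ2 : Hist G → G.S → G.A → ℝ}

theorem mul_le_expVal {u : G.S → ℝ} (hσ1 : σ1 ∈ Strat G G.act1)
    (hσ2 : σ2 ∈ Strat G G.act2) {m : ℝ} (hm : ∀ s, m ≤ u s) :
    ∀ L s h, L * m ≤ expVal G u σ1 σ2 L s h
  | 0, _, _ => by simp [expVal]
  | L + 1, s, h => by
    rw [expVal, Nat.cast_succ, add_one_mul, add_comm]
    exact add_le_add (hm s) (le_sum_sum_mul_of_mem_distOn (hσ1 h s) (hσ2 h s)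
      fun _ _ _ _ => mul_le_expVal hσ1 hσ2 hm L _ _)

theorem exists_strat_expVal_le_dpVal (u : G.S → ℝ) (hσ1 : σ1 ∈ Strat G G.act1) (L : ℕ) :
    ∃ σ2 ∈ Strat G G.act2, ∀ K s (h : Hist G), K + h.length = L →
      expVal G u σ1 σ2 K s h ≤ G.dpVal u K s := by
  -- `L - 1 - h.length` is the number of stages left after the current one
  have hbest (h : Hist G) (s : G.S) : ∃ b ∈ G.act2 s,
      G.stageGuarantee (G.dpVal u (L - 1 - h.length)) s (σ1 h s) =
        ∑ a1 ∈ G.act1 s, σ1 h s a1 * G.dpVal u (L - 1 - h.length) (G.tr s a1 b) :=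
    exists_mem_eq_inf' (G.h2 s) _
  choose b hb hbest using hbest
  refine ⟨fun h s => Pi.single (b h s) 1, fun h s => single_mem_distOn (hb h s), fun K => ?_⟩
  induction K with
  | zero => intro s h _; simp [expVal, dpVal]
  | succ K ih =>
    intro s h hlen
    have hK : L - 1 - h.length = K := by omega
    calc expVal G u σ1 _ (K + 1) s h
        = u s + ∑ a1 ∈ G.act1 s, σ1 h s a1 *
            expVal G u σ1 (fun h s => Pi.single (b h s) 1) K (G.tr s a1 (b h s))
              (h ++ [(s, a1, b h s)]) := by
          rw [expVal, sum_sum_mul_single (hb h s)]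
      _ ≤ u s + ∑ a1 ∈ G.act1 s, σ1 h s a1 * G.dpVal u K (G.tr s a1 (b h s)) := by
          gcongr with a1
          · exact (hσ1 h s).1 a1
          · exact ih _ _ (by simp; omega)
      _ = u s + G.stageGuarantee (G.dpVal u K) s (σ1 h s) := by rw [← hK, hbest]
      _ ≤ G.dpVal u (K + 1) s := add_le_add_right (stageGuarantee_le_stageVal (hσ1 h s)) _

theorem exists_strat_dpVal_le_expVal (u : G.S → ℝ) (L : ℕ) :
    ∃ σ1 ∈ Strat G G.act1, ∀ σ2 ∈ Strat G G.act2, ∀ K s (h : Hist G), K + h.length = L →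
      G.dpVal u K s ≤ expVal G u σ1 σ2 K s h := by
  choose x hx hxopt using fun K => exists_stageGuarantee_eq_stageVal (G.dpVal u K)
  refine ⟨fun h s => x (L - 1 - h.length) s, fun h s => hx _ s, fun σ2 hσ2 K => ?_⟩
  induction K with
  | zero => intro s h _; simp [expVal, dpVal]
  | succ K ih =>
    intro s h hlen
    have hK : L - 1 - h.length = K := by omega
    calc G.dpVal u (K + 1) s = u s + G.stageGuarantee (G.dpVal u K) s (x K s) := by
          rw [dpVal, hxopt]
      _ ≤ u s + ∑ a1 ∈ G.act1 s, ∑ a2 ∈ G.act2 s,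
            x K s a1 * σ2 h s a2 * G.dpVal u K (G.tr s a1 a2) :=
          add_le_add_right (stageGuarantee_le_sum_sum _ (hσ2 h s)) _
      _ ≤ expVal G u (fun h s => x (L - 1 - h.length) s) σ2 (K + 1) s h := by
          rw [expVal, hK]
          gcongr with a1 _ a2
          · exact mul_nonneg ((hx K s).1 a1) ((hσ2 h s).1 a2)
          · exact ih _ _ (by simp; omega)

theorem valFrom_eq_dpVal (u : G.S → ℝ) (L : ℕ) (s : G.S) :
    valFrom G u L s = G.dpVal u L s := by
  obtain ⟨σ1, hσ1, hopt⟩ := exists_strat_dpVal_le_expVal u L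
  obtain ⟨σ2, hσ2, -⟩ := exists_strat_expVal_le_dpVal u hσ1 L
  have : Nonempty (Strat G G.act1) := ⟨⟨σ1, hσ1⟩⟩
  have : Nonempty (Strat G G.act2) := ⟨⟨σ2, hσ2⟩⟩
  have hbdd (τ1 : Strat G G.act1) :
      BddBelow (Set.range fun τ2 : Strat G G.act2 => expVal G u τ1.1 τ2.1 L s []) :=
    ⟨L * univ.inf' ⟨G.s0, mem_univ _⟩ u, Set.forall_mem_range.2 fun τ2 =>
      mul_le_expVal τ1.2 τ2.2 (fun t => inf'_le u (mem_univ t)) L s []⟩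
  have hle (τ1 : Strat G G.act1) :
      ⨅ τ2 : Strat G G.act2, expVal G u τ1.1 τ2.1 L s [] ≤ G.dpVal u L s := by
    obtain ⟨τ2, hτ2, hgreedy⟩ := exists_strat_expVal_le_dpVal u τ1.2 L
    exact (ciInf_le (hbdd τ1) ⟨τ2, hτ2⟩).trans (hgreedy L s [] rfl)
  exact le_antisymm (ciSup_le hle) <| le_ciSup_of_le ⟨_, Set.forall_mem_range.2 hle⟩
    ⟨σ1, hσ1⟩ (le_ciInf fun τ2 => hopt τ2.1 τ2.2 L s [] rfl)

theorem gval_eq_dpVal (u : G.S → ℝ) (L : ℕ) : gval G u L = G.dpVal u L G.s0 :=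
  valFrom_eq_dpVal u L G.s0

structure IsSimulation {A B : ConcGame} (uA : A.S → ℝ) (uB : B.S → ℝ)
    (R : A.S → B.S → Prop) : Prop where
  utility_le : ∀ s t, R s t → uA s ≤ uB t
  exists_copy : ∀ s t, R s t → ∃ ψ : A.A → B.A, (∀ a ∈ A.act1 s, ψ a ∈ B.act1 t) ∧
    ∀ b2 ∈ B.act2 t, ∃ a2 ∈ A.act2 s, ∀ a1 ∈ A.act1 s, R (A.tr s a1 a2) (B.tr t (ψ a1) b2)

variable {A B : ConcGame}

theorem stageVal_le_of_copy {vA : A.S → ℝ} {vB : B.S → ℝ} {R : A.S → B.S → Prop}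
    (hv : ∀ s t, R s t → vA s ≤ vB t) {s : A.S} {t : B.S} {ψ : A.A → B.A}
    (hψ : ∀ a ∈ A.act1 s, ψ a ∈ B.act1 t)
    (hmatch : ∀ b2 ∈ B.act2 t, ∃ a2 ∈ A.act2 s, ∀ a1 ∈ A.act1 s,
      R (A.tr s a1 a2) (B.tr t (ψ a1) b2)) :
    A.stageVal vA s ≤ B.stageVal vB t := by
  have : Nonempty (distOn (A.act1 s)) := (distOn_nonempty (A.h1 s)).to_subtype
  refine ciSup_le fun x => ?_
  obtain ⟨y, hy, hxy⟩ := exists_mem_distOn_sum_mul_comp hψ x.2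
  refine le_trans (le_inf' _ _ fun b2 hb2 => ?_) (stageGuarantee_le_stageVal hy)
  obtain ⟨a2, ha2, hR⟩ := hmatch b2 hb2
  calc A.stageGuarantee vA s x ≤ ∑ a1 ∈ A.act1 s, x.1 a1 * vA (A.tr s a1 a2) := inf'_le _ ha2
    _ ≤ ∑ a1 ∈ A.act1 s, x.1 a1 * vB (B.tr t (ψ a1) b2) :=
        sum_le_sum fun a1 ha1 => mul_le_mul_of_nonneg_left (hv _ _ (hR a1 ha1)) (x.2.1 a1)
    _ = ∑ b1 ∈ B.act1 t, y b1 * vB (B.tr t b1 b2) := (hxy fun b1 => vB (B.tr t b1 b2)).symm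

theorem IsSimulation.dpVal_le {uA : A.S → ℝ} {uB : B.S → ℝ} {R : A.S → B.S → Prop}
    (hR : IsSimulation uA uB R) : ∀ L s t, R s t → A.dpVal uA L s ≤ B.dpVal uB L t
  | 0, _, _, _ => le_rfl
  | L + 1, s, t, hst => by
    obtain ⟨ψ, hψ, hmatch⟩ := hR.exists_copy s t hst
    exact add_le_add (hR.utility_le s t hst)
      (stageVal_le_of_copy (hR.dpVal_le L) hψ hmatch)

theorem IsSimulation.gval_le {uA : A.S → ℝ} {uB : B.S → ℝ} {R : A.S → B.S → Prop}
    (hR : IsSimulation uA uB R) (h0 : R A.s0 B.s0) (L : ℕ) : gval A uA L ≤ gval B uB L := by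
  rw [gval_eq_dpVal, gval_eq_dpVal]
  exact hR.dpVal_le L _ _ h0

end ConcGame

section Abstraction

variable {G : ConcGame} {r : Setoid G.S} {q : Quotient r} {d : Quotient r × G.A × G.A}

theorem mem_succClasses {π π' : Quotient r} {a1 a2 : G.A} :
    π' ∈ succClasses G r π a1 a2 ↔
      ∃ s, Quotient.mk r s = π ∧ Quotient.mk r (G.tr s a1 a2) = π' := by
  simp [succClasses]

theorem classOf_nonempty (q : Quotient r) : (classOf G r q).Nonempty :=
  ⟨q.out, Quotient.out_eq q⟩

section Lower

variable {a : (lowerAbs G r).A}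

theorem mem_lowerAbs_act1_inl : a ∈ (lowerAbs G r).act1 (.inl q) ↔
    ∃ b ∈ G.act1 q.out, .inl b = a :=
  mem_image

theorem mem_lowerAbs_act2_inl : a ∈ (lowerAbs G r).act2 (.inl q) ↔
    ∃ b ∈ G.act2 q.out, .inl b = a :=
  mem_image

theorem mem_lowerAbs_act1_inr : a ∈ (lowerAbs G r).act1 (.inr d) ↔ a = .inr d.1 :=
  mem_singleton

theorem mem_lowerAbs_act2_inr : a ∈ (lowerAbs G r).act2 (.inr d) ↔
    ∃ π ∈ succClasses G r d.1 d.2.1 d.2.2, .inr π = a :=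
  mem_image

end Lower

section Upper

variable {a : (upperAbs G r).A}

theorem mem_upperAbs_act1_inl : a ∈ (upperAbs G r).act1 (.inl q) ↔
    ∃ b ∈ G.act1 q.out, .inl b = a :=
  mem_image

theorem mem_upperAbs_act2_inl : a ∈ (upperAbs G r).act2 (.inl q) ↔
    ∃ b ∈ G.act2 q.out, .inl b = a :=
  mem_image

theorem mem_upperAbs_act1_inr : a ∈ (upperAbs G r).act1 (.inr d) ↔
    ∃ π ∈ succClasses G r d.1 d.2.1 d.2.2, .inr π = a :=
  mem_image

theorem mem_upperAbs_act2_inr : a ∈ (upperAbs G r).act2 (.inr d) ↔ a = .inr d.1 :=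
  mem_singleton

end Upper

end Abstraction

theorem isSimulation_lowerAbs_upperAbs (G : ConcGame) (r : Setoid G.S) (u : G.S → ℝ) :
    IsSimulation (A := lowerAbs G r) (B := upperAbs G r) (lowerU G r u) (upperU G r u) (· = ·) where
  utility_le := by
    rintro _ (q | d) rfl
    · exact csInf_le_csSup ((classOf_nonempty q).image u) (Set.toFinite _).bddBelow
        (Set.toFinite _).bddAbove
    · exact le_rfl
  exists_copy := by
    rintro _ (q | ⟨π, a1, a2⟩) rfl
    · refine ⟨id, fun a ha => ha, fun b2 hb2 => ⟨b2, hb2, fun a1 ha1 => ?_⟩⟩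
      obtain ⟨b, -, rfl⟩ := mem_upperAbs_act2_inl.1 hb2
      obtain ⟨c, -, rfl⟩ := mem_lowerAbs_act1_inl.1 ha1
      rfl
    · obtain ⟨π₀, hπ₀⟩ := succClasses_nonempty G r π a1 a2
      refine ⟨fun _ => .inr π₀, fun _ _ => mem_upperAbs_act1_inr.2 ⟨π₀, hπ₀, rfl⟩,
        fun b2 hb2 => ⟨.inr π₀, mem_lowerAbs_act2_inr.2 ⟨π₀, hπ₀, rfl⟩, fun a1 ha1 => ?_⟩⟩
      rw [mem_upperAbs_act2_inr.1 hb2, mem_lowerAbs_act1_inr.1 ha1]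
      rfl

section Refinement

variable {G : ConcGame} {r1 r2 : Setoid G.S} (href : ∀ s s', r2.r s s' → r1.r s s')

def classMap : Quotient r2 → Quotient r1 := Quotient.map' id href

theorem Compatible.act_out_classMap (hc : Compatible G r1) (q : Quotient r2) :
    G.act1 (classMap href q).out = G.act1 q.out ∧ G.act2 (classMap href q).out = G.act2 q.out :=
  hc _ _ <| Quotient.exact <| (Quotient.out_eq _).trans (congrArg _ (Quotient.out_eq q)).symm

theorem classOf_subset_classOf_classMap (q : Quotient r2) :
    classOf G r2 q ⊆ classOf G r1 (classMap href q) := by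
  rintro s rfl
  rfl

theorem classMap_mem_succClasses {π π' : Quotient r2} {a1 a2 : G.A}
    (h : π' ∈ succClasses G r2 π a1 a2) :
    classMap href π' ∈ succClasses G r1 (classMap href π) a1 a2 := by
  obtain ⟨s, rfl, rfl⟩ := mem_succClasses.1 h
  exact mem_succClasses.2 ⟨s, rfl, rfl⟩

def absMap : AbsS G r2 → AbsS G r1 :=
  Sum.map (classMap href) (Prod.map (classMap href) id)

theorem isSimulation_lowerAbs (hc1 : Compatible G r1) (u : G.S → ℝ) :
    IsSimulation (A := lowerAbs G r1) (B := lowerAbs G r2) (lowerU G r1 u) (lowerU G r2 u)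
      (fun s t => s = absMap href t) where
  utility_le := by
    rintro _ (q | d) rfl
    · exact csInf_le_csInf (Set.toFinite _).bddBelow ((classOf_nonempty q).image u)
        (Set.image_mono (classOf_subset_classOf_classMap href q))
    · exact le_rfl
  exists_copy := by
    rintro _ (q | ⟨π, a1, a2⟩) rfl
    · obtain ⟨hq1, hq2⟩ := hc1.act_out_classMap href q
      refine ⟨Sum.map id fun _ => q, fun a ha => ?_, fun b2 hb2 => ?_⟩
      · obtain ⟨b, hb, rfl⟩ := mem_lowerAbs_act1_inl.1 ha
        exact mem_lowerAbs_act1_inl.2 ⟨b, hq1 ▸ hb, rfl⟩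
      · obtain ⟨b, hb, rfl⟩ := mem_lowerAbs_act2_inl.1 hb2
        refine ⟨.inl b, mem_lowerAbs_act2_inl.2 ⟨b, hq2 ▸ hb, rfl⟩, fun a1 ha1 => ?_⟩
        obtain ⟨c, -, rfl⟩ := mem_lowerAbs_act1_inl.1 ha1
        rfl
    · refine ⟨fun _ => .inr π, fun _ _ => mem_lowerAbs_act1_inr.2 rfl, fun b2 hb2 => ?_⟩
      obtain ⟨π', hπ', rfl⟩ := mem_lowerAbs_act2_inr.1 hb2
      refine ⟨.inr (classMap href π'),
        mem_lowerAbs_act2_inr.2 ⟨_, classMap_mem_succClasses href hπ', rfl⟩, fun a1 ha1 => ?_⟩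
      rw [mem_lowerAbs_act1_inr.1 ha1]
      rfl

theorem isSimulation_upperAbs (hc1 : Compatible G r1) (u : G.S → ℝ) :
    IsSimulation (A := upperAbs G r2) (B := upperAbs G r1) (upperU G r2 u) (upperU G r1 u)
      (fun s t => absMap href s = t) where
  utility_le := by
    rintro (q | d) _ rfl
    · exact csSup_le_csSup (Set.toFinite _).bddAbove ((classOf_nonempty q).image u)
        (Set.image_mono (classOf_subset_classOf_classMap href q))
    · exact le_rfl
  exists_copy := by
    rintro (q | ⟨π, a1, a2⟩) _ rfl
    · obtain ⟨hq1, hq2⟩ := hc1.act_out_classMap href q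
      refine ⟨Sum.map id (classMap href), fun a ha => ?_, fun b2 hb2 => ?_⟩
      · obtain ⟨b, hb, rfl⟩ := mem_upperAbs_act1_inl.1 ha
        exact mem_upperAbs_act1_inl.2 ⟨b, hq1 ▸ hb, rfl⟩
      · obtain ⟨b, hb, rfl⟩ := mem_upperAbs_act2_inl.1 hb2
        refine ⟨.inl b, mem_upperAbs_act2_inl.2 ⟨b, hq2 ▸ hb, rfl⟩, fun a1 ha1 => ?_⟩
        obtain ⟨c, -, rfl⟩ := mem_upperAbs_act1_inl.1 ha1
        rfl
    · refine ⟨Sum.map id (classMap href), fun a ha => ?_, fun b2 hb2 => ?_⟩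
      · obtain ⟨π', hπ', rfl⟩ := mem_upperAbs_act1_inr.1 ha
        exact mem_upperAbs_act1_inr.2 ⟨_, classMap_mem_succClasses href hπ', rfl⟩
      · refine ⟨.inr π, mem_upperAbs_act2_inr.2 rfl, fun a1 ha1 => ?_⟩
        obtain ⟨π', -, rfl⟩ := mem_upperAbs_act1_inr.1 ha1
        rw [mem_upperAbs_act2_inr.1 hb2]
        rfl

end Refinement

end

theorem abstraction_refinement_general (G : ConcGame) (u : G.S → ℝ)
    (r1 r2 : Setoid G.S)
    (href : ∀ s s', r2.r s s' → r1.r s s')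
    (hc1 : Compatible G r1) (L : ℕ) :
    gval (lowerAbs G r1) (lowerU G r1 u) (2 * L)
        ≤ gval (lowerAbs G r2) (lowerU G r2 u) (2 * L) ∧
    gval (lowerAbs G r2) (lowerU G r2 u) (2 * L)
        ≤ gval (upperAbs G r2) (upperU G r2 u) (2 * L) ∧
    gval (upperAbs G r2) (upperU G r2 u) (2 * L)
        ≤ gval (upperAbs G r1) (upperU G r1 u) (2 * L) :=
  ⟨(isSimulation_lowerAbs href hc1 u).gval_le rfl _,
    (isSimulation_lowerAbs_upperAbs G r2 u).gval_le rfl _,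
    (isSimulation_upperAbs href hc1 u).gval_le rfl _⟩

/-- Refinement property: if the partition induced by `r2` refines the one induced
by `r1` (i.e. `r2`-equivalence implies `r1`-equivalence), then the abstracted
values of the finer partition lie between those of the coarser one. -/
theorem abstraction_refinement (G : ConcGame) (u : G.S → ℝ)
    (r1 r2 : Setoid G.S)
    (href : ∀ s s', r2.r s s' → r1.r s s')
    (hc1 : Compatible G r1) (hc2 : Compatible G r2) (L : ℕ) :
    gval (lowerAbs G r1) (lowerU G r1 u) (2 * L)
        ≤ gval (lowerAbs G r2) (lowerU G r2 u) (2 * L) ∧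
    gval (lowerAbs G r2) (lowerU G r2 u) (2 * L)
        ≤ gval (upperAbs G r2) (upperU G r2 u) (2 * L) ∧
    gval (upperAbs G r2) (upperU G r2 u) (2 * L)
        ≤ gval (upperAbs G r1) (upperU G r1 u) (2 * L) :=
  abstraction_refinement_general G u r1 r2 href hc1 L
end

section
/- Completeness in the limit of game abstraction: For any finite concurrent two-player zero-sum game (G, u), horizon L, and partition Π1 of its state space compatible with action sets, and for every ε ≥ 0, there exists a refinement Π2 ⊑ Π1 whose lower and upper abstractions (G2↓, u2↓), (G2↑, u2↑) satisfy υ_L(G2↑, u2↑) − υ_L(G2↓, u2↓) ≤ ε. In particular, for the unit partition Π* = {{s} : s ∈ S}, the lower and upper abstraction values coincide. -/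
open scoped BigOperators

/-- The unit partition: every state in its own singleton class. -/
def unitSetoid (G : ConcGame) : Setoid G.S := ⟨Eq, eq_equivalence⟩

/-
For the unit partition every dummy state `(π, a1, a2)` has exactly one successor class, so the
lower and upper abstractions differ only in which player is made to name it. Exchanging the two
(forced) actions at dummy states is therefore an isomorphism of games between them, and
isomorphic games have equal values: strategies are transported along the induced bijection of
histories. Singleton classes also make the min- and max-utilities agree. For the first claim,
the unit partition is itself a compatible refinement of any partition, with gap `0 ≤ ε`.
-/

namespace ConcGame

/-- The action relabelling may depend on the state, and transitions need only commute with the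
relabelling on available actions: no other action carries probability. -/
structure Iso (G H : ConcGame) where
  state : G.S ≃ H.S
  actEquiv₁ : G.S → G.A ≃ H.A
  actEquiv₂ : G.S → G.A ≃ H.A
  map_s0 : state G.s0 = H.s0
  map_act1 : ∀ s, (G.act1 s).map (actEquiv₁ s).toEmbedding = H.act1 (state s)
  map_act2 : ∀ s, (G.act2 s).map (actEquiv₂ s).toEmbedding = H.act2 (state s)
  map_tr : ∀ s, ∀ a1 ∈ G.act1 s, ∀ a2 ∈ G.act2 s,
    state (G.tr s a1 a2) = H.tr (state s) (actEquiv₁ s a1) (actEquiv₂ s a2)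

end ConcGame

lemma comp_mem_strat {G H : ConcGame} {act : G.S → Finset G.A} {act' : H.S → Finset H.A}
    (g : Hist G → Hist H) (e : G.S → H.S) (f : G.S → G.A ≃ H.A)
    (hf : ∀ s, (act s).map (f s).toEmbedding = act' (e s))
    {τ : Hist H → H.S → H.A → ℝ} (hτ : τ ∈ Strat H act') :
    (fun h s a => τ (g h) (e s) (f s a)) ∈ Strat G act := by
  intro h s
  obtain ⟨nonneg, sum_one, zero⟩ := hτ (g h) (e s)
  refine ⟨fun a => nonneg _, ?_, fun a ha => zero _ ?_⟩
  · rwa [← hf, Finset.sum_map] at sum_one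
  · rwa [← hf, Finset.mem_map_equiv, Equiv.symm_apply_apply]

namespace ConcGame.Iso

variable {G H : ConcGame} (i : G.Iso H)

def mapHist : Hist G → Hist H :=
  List.map fun x => (i.state x.1, i.actEquiv₁ x.1 x.2.1, i.actEquiv₂ x.1 x.2.2)

def unmapHist : Hist H → Hist G :=
  List.map fun y => (i.state.symm y.1, (i.actEquiv₁ (i.state.symm y.1)).symm y.2.1,
    (i.actEquiv₂ (i.state.symm y.1)).symm y.2.2)

lemma unmapHist_mapHist (h : Hist G) : i.unmapHist (i.mapHist h) = h := by
  simp [mapHist, unmapHist, List.map_map, Function.comp_def]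

def pullStrat (f : G.S → G.A ≃ H.A) (τ : Hist H → H.S → H.A → ℝ) :
    Hist G → G.S → G.A → ℝ :=
  fun h s a => τ (i.mapHist h) (i.state s) (f s a)

def pushStrat (f : G.S → G.A ≃ H.A) (σ : Hist G → G.S → G.A → ℝ) :
    Hist H → H.S → H.A → ℝ :=
  fun h s a => σ (i.unmapHist h) (i.state.symm s) ((f (i.state.symm s)).symm a)

lemma pullStrat_pushStrat (f : G.S → G.A ≃ H.A) (σ : Hist G → G.S → G.A → ℝ) :
    i.pullStrat f (i.pushStrat f σ) = σ := by
  funext h s a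
  simp [pullStrat, pushStrat, unmapHist_mapHist]

section Strategies

variable {act : G.S → Finset G.A} {act' : H.S → Finset H.A} {f : G.S → G.A ≃ H.A}

lemma pullStrat_mem (hf : ∀ s, (act s).map (f s).toEmbedding = act' (i.state s))
    {τ : Hist H → H.S → H.A → ℝ} (hτ : τ ∈ Strat H act') :
    i.pullStrat f τ ∈ Strat G act :=
  comp_mem_strat _ _ _ hf hτ

lemma pushStrat_mem (hf : ∀ s, (act s).map (f s).toEmbedding = act' (i.state s))
    {σ : Hist G → G.S → G.A → ℝ} (hσ : σ ∈ Strat G act) :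
    i.pushStrat f σ ∈ Strat H act' := by
  refine comp_mem_strat _ _ _ (fun s => ?_) hσ
  have hs := hf (i.state.symm s)
  rw [Equiv.apply_symm_apply] at hs
  simp [← hs, Finset.map_map]

def pull (hf : ∀ s, (act s).map (f s).toEmbedding = act' (i.state s)) :
    Strat H act' → Strat G act :=
  fun τ => ⟨i.pullStrat f τ, i.pullStrat_mem hf τ.2⟩

lemma pull_surjective (hf : ∀ s, (act s).map (f s).toEmbedding = act' (i.state s)) :
    Function.Surjective (i.pull hf) :=
  fun σ => ⟨⟨_, i.pushStrat_mem hf σ.2⟩, Subtype.ext (i.pullStrat_pushStrat f σ)⟩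

end Strategies

lemma expVal_pullStrat (v : H.S → ℝ) (τ1 τ2 : Hist H → H.S → H.A → ℝ) (L : ℕ) :
    ∀ s h,
      expVal G (v ∘ i.state) (i.pullStrat i.actEquiv₁ τ1) (i.pullStrat i.actEquiv₂ τ2) L s h =
        expVal H v τ1 τ2 L (i.state s) (i.mapHist h) := by
  induction L with
  | zero => intro s h; rfl
  | succ L ih =>
    intro s h
    rw [expVal, expVal, ← i.map_act1, Finset.sum_map]
    congr 1
    refine Finset.sum_congr rfl fun a1 ha1 => ?_
    rw [← i.map_act2, Finset.sum_map]
    refine Finset.sum_congr rfl fun a2 ha2 => ?_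
    rw [ih, i.map_tr s a1 ha1 a2 ha2]
    simp [pullStrat, mapHist]

lemma valFrom_eq (v : H.S → ℝ) (L : ℕ) (s : G.S) :
    valFrom H v L (i.state s) = valFrom G (v ∘ i.state) L s := by
  refine (i.pull_surjective i.map_act1).iSup_congr _ fun τ1 => ?_
  exact ((i.pull_surjective i.map_act2).iInf_congr _ fun τ2 =>
    i.expVal_pullStrat v τ1 τ2 L s []).symm

theorem gval_eq (v : H.S → ℝ) (L : ℕ) : gval H v L = gval G (v ∘ i.state) L := by
  rw [gval, gval, ← i.map_s0, i.valFrom_eq]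

end ConcGame.Iso

section DeterministicPartition

variable {G : ConcGame} {r : Setoid G.S}

open Classical in
noncomputable def dummySwap (nxt : Quotient r × G.A × G.A → Quotient r) :
    AbsS G r → AbsA G r ≃ AbsA G r
  | Sum.inl _ => Equiv.refl _
  | Sum.inr d => Equiv.swap (Sum.inr d.1) (Sum.inr (nxt d))

variable {nxt : Quotient r × G.A × G.A → Quotient r}

noncomputable def lowerAbsIsoUpperAbs
    (hnxt : ∀ d : Quotient r × G.A × G.A, succClasses G r d.1 d.2.1 d.2.2 = {nxt d}) :
    (lowerAbs G r).Iso (upperAbs G r) where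
  state := Equiv.refl _
  actEquiv₁ := dummySwap nxt
  actEquiv₂ := dummySwap nxt
  map_s0 := rfl
  map_act1 := by
    rintro (q | d)
    · exact Finset.map_refl
    · show _ = (upperAbs G r).act1 (Sum.inr d)
      simp [lowerAbs, upperAbs, dummySwap, hnxt]
  map_act2 := by
    rintro (q | d)
    · exact Finset.map_refl
    · show _ = (upperAbs G r).act2 (Sum.inr d)
      simp [lowerAbs, upperAbs, dummySwap, hnxt]
  map_tr := by
    rintro (q | d) a1 ha1 a2 ha2
    · obtain ⟨b1, -, rfl⟩ := Finset.mem_image.mp ha1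
      obtain ⟨b2, -, rfl⟩ := Finset.mem_image.mp ha2
      rfl
    · obtain rfl : a1 = Sum.inr d.1 := Finset.mem_singleton.mp ha1
      obtain ⟨π, hπ, rfl⟩ := Finset.mem_image.mp ha2
      rw [hnxt, Finset.mem_singleton] at hπ
      subst hπ
      show Sum.inl (nxt d) =
        (upperAbs G r).tr (Sum.inr d) (dummySwap nxt (Sum.inr d) (Sum.inr d.1)) _
      simp [dummySwap, upperAbs]

theorem gval_upperAbs_eq_gval_lowerAbs
    (hnxt : ∀ d : Quotient r × G.A × G.A, succClasses G r d.1 d.2.1 d.2.2 = {nxt d})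
    (v : AbsS G r → ℝ) (L : ℕ) :
    gval (upperAbs G r) v L = gval (lowerAbs G r) v L :=
  (lowerAbsIsoUpperAbs hnxt).gval_eq v L

end DeterministicPartition

section UnitPartition

variable (G : ConcGame)

lemma classOf_unitSetoid (q : Quotient (unitSetoid G)) :
    classOf G (unitSetoid G) q = {q.out} := by
  ext s
  exact ⟨fun h => Quotient.exact (h.trans q.out_eq.symm), fun h => h ▸ q.out_eq⟩

lemma succClasses_unitSetoid (d : Quotient (unitSetoid G) × G.A × G.A) :
    succClasses G (unitSetoid G) d.1 d.2.1 d.2.2 = {⟦G.tr d.1.out d.2.1 d.2.2⟧} := by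
  ext π
  simp only [succClasses, Finset.mem_image, Finset.mem_filter, Finset.mem_univ, true_and,
    Finset.mem_singleton]
  constructor
  · rintro ⟨s, hs, rfl⟩
    obtain rfl : s = d.1.out := Quotient.exact (hs.trans d.1.out_eq.symm)
    rfl
  · rintro rfl
    exact ⟨d.1.out, d.1.out_eq, rfl⟩

lemma upperU_unitSetoid (u : G.S → ℝ) :
    upperU G (unitSetoid G) u = lowerU G (unitSetoid G) u := by
  funext s
  rcases s with q | d
  · simp [upperU, lowerU, classOf_unitSetoid]
  · rfl

theorem gval_upperAbs_unitSetoid (u : G.S → ℝ) (L : ℕ) :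
    gval (upperAbs G (unitSetoid G)) (upperU G (unitSetoid G) u) L =
      gval (lowerAbs G (unitSetoid G)) (lowerU G (unitSetoid G) u) L := by
  rw [upperU_unitSetoid]
  exact gval_upperAbs_eq_gval_lowerAbs (succClasses_unitSetoid G) _ L

end UnitPartition

theorem abstraction_completeness_general (G : ConcGame) (u : G.S → ℝ) (L : ℕ)
    (r1 : Setoid G.S) :
    (∀ ε : ℝ, 0 ≤ ε →
      ∃ r2 : Setoid G.S, (∀ s s', r2.r s s' → r1.r s s') ∧ Compatible G r2 ∧
        gval (upperAbs G r2) (upperU G r2 u) L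
          - gval (lowerAbs G r2) (lowerU G r2 u) L ≤ ε) ∧
    gval (upperAbs G (unitSetoid G)) (upperU G (unitSetoid G) u) L
      = gval (lowerAbs G (unitSetoid G)) (lowerU G (unitSetoid G) u) L := by
  have unit_eq := gval_upperAbs_unitSetoid G u L
  refine ⟨fun ε hε => ⟨unitSetoid G, ?_, ?_, ?_⟩, unit_eq⟩
  · rintro s _ rfl
    exact r1.refl s
  · rintro s _ rfl
    exact ⟨rfl, rfl⟩
  · rwa [unit_eq, sub_self]

/-- Completeness in the limit: every compatible partition admits a compatible
refinement whose upper and lower abstraction values differ by at most `ε`;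
in particular, for the unit partition the two values coincide. -/
theorem abstraction_completeness (G : ConcGame) (u : G.S → ℝ) (L : ℕ)
    (r1 : Setoid G.S) (hc1 : Compatible G r1) :
    (∀ ε : ℝ, 0 ≤ ε →
      ∃ r2 : Setoid G.S, (∀ s s', r2.r s s' → r1.r s s') ∧ Compatible G r2 ∧
        gval (upperAbs G r2) (upperU G r2 u) L
          - gval (lowerAbs G r2) (lowerU G r2 u) L ≤ ε) ∧
    gval (upperAbs G (unitSetoid G)) (upperU G (unitSetoid G) u) L
      = gval (lowerAbs G (unitSetoid G)) (lowerU G (unitSetoid G) u) L :=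
  abstraction_completeness_general G u L r1
end

section
/- In an acyclic finite concurrent two-player zero-sum game, memoryless mixed strategies suffice: the value computed over all (history-dependent) mixed strategies equals the value computed over memoryless mixed strategies only, for both players. -/
open scoped BigOperators

/-- A finite acyclic-style concurrent game structure: available-action sets may be
empty (dead-ends). -/
structure AGame where
  S : Type
  A : Type
  [fS : Fintype S]
  [dS : DecidableEq S]
  [fA : Fintype A]
  [dA : DecidableEq A]
  s0 : S
  act1 : S → Finset A
  act2 : S → Finset A
  tr : S → A → A → S

attribute [instance] AGame.fS AGame.dS AGame.fA AGame.dA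

/-- One-step transition relation: `s'` is reachable from `s` by some valid
action pair. -/
def AGame.step (G : AGame) (s s' : G.S) : Prop :=
  ∃ a1 ∈ G.act1 s, ∃ a2 ∈ G.act2 s, G.tr s a1 a2 = s'

/-- Acyclicity: no state is reachable from itself via a nonempty sequence of
transitions. -/
def AGame.Acyclic (G : AGame) : Prop :=
  ∀ s : G.S, ¬ Relation.TransGen G.step s s

/-- Memoryless mixed strategies for action map `act`: at every non-dead-end state,
a probability distribution supported on the available actions. -/
def MStrat (G : AGame) (act : G.S → Finset G.A) : Set (G.S → G.A → ℝ) :=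
  {σ | ∀ s, (∀ a, 0 ≤ σ s a) ∧
        ((act s).Nonempty → ∑ a ∈ act s, σ s a = 1) ∧ ∀ a ∉ act s, σ s a = 0}

open Classical in
/-- Expected total utility of the memoryless profile `(σ1, σ2)` from state `s`:
plays stop at dead-ends; since the game is acyclic, fuel `Fintype.card G.S`
suffices to exhaust every play. -/
noncomputable def aExp (G : AGame) (u : G.S → ℝ) (σ1 σ2 : G.S → G.A → ℝ) :
    ℕ → G.S → ℝ
  | 0, s => u s
  | (n + 1), s =>
      if (G.act1 s).Nonempty ∧ (G.act2 s).Nonempty then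
        u s + ∑ a1 ∈ G.act1 s, ∑ a2 ∈ G.act2 s,
          σ1 s a1 * σ2 s a2 * aExp G u σ1 σ2 n (G.tr s a1 a2)
      else u s

/-- The value of the acyclic game started at `s`, over memoryless mixed
strategies. -/
noncomputable def aVal (G : AGame) (u : G.S → ℝ) (s : G.S) : ℝ :=
  ⨆ σ1 : MStrat G G.act1, ⨅ σ2 : MStrat G G.act2,
    aExp G u σ1.1 σ2.1 (Fintype.card G.S) s

/-- Histories of an acyclic game. -/
abbrev AHist (G : AGame) := List (G.S × G.A × G.A)

/-- History-dependent mixed strategies for action map `act`. -/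
def HStrat (G : AGame) (act : G.S → Finset G.A) : Set (AHist G → G.S → G.A → ℝ) :=
  {σ | ∀ h s, (∀ a, 0 ≤ σ h s a) ∧
        ((act s).Nonempty → ∑ a ∈ act s, σ h s a = 1) ∧ ∀ a ∉ act s, σ h s a = 0}

open Classical in
/-- Expected total utility of a history-dependent profile `(σ1, σ2)` from `s`. -/
noncomputable def aExpH (G : AGame) (u : G.S → ℝ)
    (σ1 σ2 : AHist G → G.S → G.A → ℝ) : ℕ → G.S → AHist G → ℝ
  | 0, s, _ => u s
  | (n + 1), s, h =>
      if (G.act1 s).Nonempty ∧ (G.act2 s).Nonempty then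
        u s + ∑ a1 ∈ G.act1 s, ∑ a2 ∈ G.act2 s,
          σ1 h s a1 * σ2 h s a2 *
            aExpH G u σ1 σ2 n (G.tr s a1 a2) (h ++ [(s, a1, a2)])
      else u s

/-!
Backward induction along the acyclic transition relation. At a live state, the game is a one-shot
matrix game whose payoffs are the values of the successor states; by compactness of the simplex the
row player has an optimal mixed action there, and the column player has a pure best response to
any mixed action. Playing the optimal actions memorylessly secures `AGame.value` against every
history-dependent opponent, and against any history-dependent strategy of player 1 the step-wise
best responses hold the payoff down to `AGame.value`. Hence both sup-inf expressions equal the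
value of the initial state.
-/

open Finset

lemma ciSup_ciInf_eq_of_saddle {α : Type*} [ConditionallyCompleteLattice α] {ι κ : Sort*}
    {f : ι → κ → α} {c : α} (hbdd : ∀ i, BddBelow (Set.range (f i)))
    (hle : ∀ i, ∃ j, f i j ≤ c) (hge : ∃ i, ∀ j, c ≤ f i j) : ⨆ i, ⨅ j, f i j = c := by
  obtain ⟨i₀, hi₀⟩ := hge
  have : Nonempty ι := ⟨i₀⟩
  have : Nonempty κ := ⟨(hle i₀).choose⟩
  have hinf : ∀ i, ⨅ j, f i j ≤ c := fun i =>
    let ⟨j, hj⟩ := hle i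
    ciInf_le_of_le (hbdd i) j hj
  exact le_antisymm (ciSup_le hinf)
    (le_ciSup_of_le ⟨c, Set.forall_mem_range.2 hinf⟩ i₀ (le_ciInf hi₀))

section MatrixGame

-- Matrix games with rows `t1` (the maximizer's actions), columns `t2`, and payoffs `M a1 a2`.
variable {A : Type*} (t1 t2 : Finset A)

-- The condition that `MStrat` and `HStrat` impose on each row, so rows of strategies are
-- `IsDistOn` by definition.
def IsDistOn (t : Finset A) (ρ : A → ℝ) : Prop :=
  (∀ a, 0 ≤ ρ a) ∧ (t.Nonempty → ∑ a ∈ t, ρ a = 1) ∧ ∀ a ∉ t, ρ a = 0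

lemma isDistOn_empty : IsDistOn (∅ : Finset A) 0 :=
  ⟨fun _ => le_rfl, fun h => absurd h not_nonempty_empty, fun _ _ => rfl⟩

lemma isDistOn_single [DecidableEq A] {t : Finset A} {b : A} (hb : b ∈ t) :
    IsDistOn t (Pi.single b 1) := by
  refine ⟨fun a => ?_, fun _ => by simp [sum_pi_single', hb], fun a ha => ?_⟩
  · by_cases hab : a = b <;> simp [hab]
  · exact Pi.single_eq_of_ne (ne_of_mem_of_not_mem hb ha).symm _

lemma exists_isDistOn [DecidableEq A] (t : Finset A) : ∃ ρ, IsDistOn t ρ := by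
  rcases t.eq_empty_or_nonempty with rfl | ⟨b, hb⟩
  · exact ⟨0, isDistOn_empty⟩
  · exact ⟨_, isDistOn_single hb⟩

lemma isCompact_setOf_isDistOn (t : Finset A) : IsCompact {ρ : A → ℝ | IsDistOn t ρ} := by
  refine (isCompact_Icc (a := 0) (b := 1)).of_isClosed_subset ?_ fun ρ hρ => ⟨hρ.1, fun a => ?_⟩
  · simp only [IsDistOn, Set.ofPred_and, Set.ofPred_forall]
    exact (isClosed_iInter fun a => isClosed_le (by fun_prop) (by fun_prop)).inter
      ((isClosed_iInter fun _ => isClosed_eq (by fun_prop) (by fun_prop)).inter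
      (isClosed_iInter fun a => isClosed_iInter fun _ => isClosed_eq (by fun_prop) (by fun_prop)))
  · by_cases ha : a ∈ t
    · rw [Pi.one_apply, ← hρ.2.1 ⟨a, ha⟩]
      exact single_le_sum (fun b _ => hρ.1 b) ha
    · simp [hρ.2.2 a ha]

lemma IsDistOn.le_sum_mul {t : Finset A} {w f : A → ℝ} {c : ℝ} (hw : IsDistOn t w)
    (ht : t.Nonempty) (hf : ∀ a ∈ t, c ≤ f a) : c ≤ ∑ a ∈ t, w a * f a :=
  calc c = ∑ a ∈ t, w a * c := by rw [← sum_mul, hw.2.1 ht, one_mul]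
    _ ≤ ∑ a ∈ t, w a * f a := sum_le_sum fun a ha => mul_le_mul_of_nonneg_left (hf a ha) (hw.1 a)

def expectedPayoff (ρ1 ρ2 : A → ℝ) (M : A → A → ℝ) : ℝ :=
  ∑ a1 ∈ t1, ∑ a2 ∈ t2, ρ1 a1 * ρ2 a2 * M a1 a2

lemma expectedPayoff_eq_sum_mul_sum (ρ1 ρ2 : A → ℝ) (M : A → A → ℝ) :
    expectedPayoff t1 t2 ρ1 ρ2 M = ∑ a2 ∈ t2, ρ2 a2 * ∑ a1 ∈ t1, ρ1 a1 * M a1 a2 := by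
  rw [expectedPayoff, sum_comm]
  refine sum_congr rfl fun a2 _ => ?_
  rw [mul_sum]
  exact sum_congr rfl fun a1 _ => by ring

lemma expectedPayoff_mono {ρ1 ρ2 : A → ℝ} {M M' : A → A → ℝ} (hρ1 : IsDistOn t1 ρ1)
    (hρ2 : IsDistOn t2 ρ2) (hM : ∀ a1 ∈ t1, ∀ a2 ∈ t2, M a1 a2 ≤ M' a1 a2) :
    expectedPayoff t1 t2 ρ1 ρ2 M ≤ expectedPayoff t1 t2 ρ1 ρ2 M' :=
  sum_le_sum fun a1 h1 => sum_le_sum fun a2 h2 =>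
    mul_le_mul_of_nonneg_left (hM a1 h1 a2 h2) (mul_nonneg (hρ1.1 a1) (hρ2.1 a2))

lemma le_expectedPayoff {ρ1 ρ2 : A → ℝ} {M : A → A → ℝ} {c : ℝ} (hρ1 : IsDistOn t1 ρ1)
    (hρ2 : IsDistOn t2 ρ2) (h1 : t1.Nonempty) (h2 : t2.Nonempty)
    (hM : ∀ a1 ∈ t1, ∀ a2 ∈ t2, c ≤ M a1 a2) : c ≤ expectedPayoff t1 t2 ρ1 ρ2 M := by
  rw [expectedPayoff_eq_sum_mul_sum]
  exact hρ2.le_sum_mul h2 fun a2 ha2 => hρ1.le_sum_mul h1 fun a1 ha1 => hM a1 ha1 a2 ha2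

def securityLevel (h2 : t2.Nonempty) (ρ : A → ℝ) (M : A → A → ℝ) : ℝ :=
  t2.inf' h2 fun a2 => ∑ a1 ∈ t1, ρ a1 * M a1 a2

lemma securityLevel_congr (h2 : t2.Nonempty) {ρ : A → ℝ} {M M' : A → A → ℝ}
    (hM : ∀ a1 ∈ t1, ∀ a2 ∈ t2, M a1 a2 = M' a1 a2) :
    securityLevel t1 t2 h2 ρ M = securityLevel t1 t2 h2 ρ M' :=
  inf'_congr h2 rfl fun a2 ha2 => sum_congr rfl fun a1 ha1 => by rw [hM a1 ha1 a2 ha2]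

lemma securityLevel_le_expectedPayoff (h2 : t2.Nonempty) {ρ1 ρ2 : A → ℝ} {M : A → A → ℝ}
    (hρ2 : IsDistOn t2 ρ2) :
    securityLevel t1 t2 h2 ρ1 M ≤ expectedPayoff t1 t2 ρ1 ρ2 M := by
  rw [expectedPayoff_eq_sum_mul_sum]
  exact hρ2.le_sum_mul h2 fun a2 ha2 => inf'_le _ ha2

lemma exists_expectedPayoff_eq_securityLevel [DecidableEq A] (ρ1 : A → ℝ) (M : A → A → ℝ) :
    ∃ ρ2, IsDistOn t2 ρ2 ∧
      ∀ h2 : t2.Nonempty, expectedPayoff t1 t2 ρ1 ρ2 M = securityLevel t1 t2 h2 ρ1 M := by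
  rcases t2.eq_empty_or_nonempty with rfl | h2
  · exact ⟨0, isDistOn_empty, fun h => absurd h not_nonempty_empty⟩
  obtain ⟨b, hb, hmin⟩ := exists_mem_eq_inf' h2 fun a2 => ∑ a1 ∈ t1, ρ1 a1 * M a1 a2
  refine ⟨Pi.single b 1, isDistOn_single hb, fun h2' => ?_⟩
  simp [expectedPayoff_eq_sum_mul_sum, securityLevel, Pi.single_apply, hb, hmin]

lemma continuous_securityLevel (h2 : t2.Nonempty) (M : A → A → ℝ) :
    Continuous fun ρ => securityLevel t1 t2 h2 ρ M :=
  Continuous.finset_inf'_apply h2 fun _ _ => by fun_prop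

noncomputable def matrixGameValue (h2 : t2.Nonempty) (M : A → A → ℝ) : ℝ :=
  sSup ((securityLevel t1 t2 h2 · M) '' {ρ | IsDistOn t1 ρ})

lemma matrixGameValue_congr (h2 : t2.Nonempty) {M M' : A → A → ℝ}
    (hM : ∀ a1 ∈ t1, ∀ a2 ∈ t2, M a1 a2 = M' a1 a2) :
    matrixGameValue t1 t2 h2 M = matrixGameValue t1 t2 h2 M' := by
  simp_rw [matrixGameValue, securityLevel_congr t1 t2 h2 hM]

lemma securityLevel_le_matrixGameValue (h2 : t2.Nonempty) {ρ : A → ℝ} (M : A → A → ℝ)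
    (hρ : IsDistOn t1 ρ) : securityLevel t1 t2 h2 ρ M ≤ matrixGameValue t1 t2 h2 M :=
  le_csSup ((isCompact_setOf_isDistOn t1).image (continuous_securityLevel t1 t2 h2 M)).bddAbove
    (Set.mem_image_of_mem _ hρ)

lemma exists_securityLevel_eq_matrixGameValue [DecidableEq A] (M : A → A → ℝ) :
    ∃ ρ, IsDistOn t1 ρ ∧
      ∀ h2 : t2.Nonempty, securityLevel t1 t2 h2 ρ M = matrixGameValue t1 t2 h2 M := by
  rcases t2.eq_empty_or_nonempty with rfl | h2
  · obtain ⟨ρ, hρ⟩ := exists_isDistOn t1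
    exact ⟨ρ, hρ, fun h => absurd h not_nonempty_empty⟩
  obtain ⟨ρ, hρ, hmax⟩ := (isCompact_setOf_isDistOn t1).exists_sSup_image_eq
    (exists_isDistOn t1) (continuous_securityLevel t1 t2 h2 M).continuousOn
  exact ⟨ρ, hρ, fun _ => hmax.symm⟩

end MatrixGame

namespace AGame

variable (G : AGame)

def Live (s : G.S) : Prop := (G.act1 s).Nonempty ∧ (G.act2 s).Nonempty

instance : DecidablePred G.Live := fun _ => instDecidableAnd

open Classical in
noncomputable def rank (s : G.S) : ℕ := #{t | Relation.TransGen G.step s t}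

noncomputable def valueStep (u f : G.S → ℝ) (s : G.S) : ℝ :=
  if hs : G.Live s then
    u s + matrixGameValue (G.act1 s) (G.act2 s) hs.2 fun a1 a2 => f (G.tr s a1 a2)
  else u s

noncomputable def value (u : G.S → ℝ) : G.S → ℝ :=
  (G.valueStep u)^[Fintype.card G.S] u

variable {G}

lemma rank_lt_of_step (hG : G.Acyclic) {s t : G.S} (hst : G.step s t) : G.rank t < G.rank s := by
  refine card_lt_card ⟨fun x hx => ?_, fun hsub => hG t ?_⟩
  · simp only [mem_filter, mem_univ, true_and] at hx ⊢
    exact .head hst hx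
  · simpa using hsub (by simpa using Relation.TransGen.single hst)

lemma rank_tr_lt (hG : G.Acyclic) {s : G.S} {a1 a2 : G.A} (h1 : a1 ∈ G.act1 s)
    (h2 : a2 ∈ G.act2 s) : G.rank (G.tr s a1 a2) < G.rank s :=
  rank_lt_of_step hG ⟨a1, h1, a2, h2, rfl⟩

lemma rank_lt_card (hG : G.Acyclic) (s : G.S) : G.rank s < Fintype.card G.S :=
  card_lt_univ_of_notMem (x := s) (by simpa using hG s)

lemma iterate_valueStep_eq (hG : G.Acyclic) (u : G.S → ℝ) {n m : ℕ} {s : G.S}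
    (hn : G.rank s < n) (hm : G.rank s < m) :
    (G.valueStep u)^[n] u s = (G.valueStep u)^[m] u s := by
  induction n generalizing m s with
  | zero => omega
  | succ n ih =>
    obtain ⟨m, rfl⟩ : ∃ k, m = k + 1 := ⟨m - 1, by omega⟩
    rw [Function.iterate_succ_apply', Function.iterate_succ_apply', valueStep, valueStep]
    split_ifs with hs
    · refine congrArg _ (matrixGameValue_congr _ _ hs.2 fun a1 h1 a2 h2 => ih ?_ ?_) <;>
      · have := rank_tr_lt hG h1 h2
        omega
    · rfl

lemma value_eq_valueStep (hG : G.Acyclic) (u : G.S → ℝ) (s : G.S) :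
    G.value u s = G.valueStep u (G.value u) s := by
  rw [value, ← Function.iterate_succ_apply' (G.valueStep u)]
  have := rank_lt_card hG s
  exact iterate_valueStep_eq hG u this (by omega)

end AGame

section HistoryDependentPayoff

variable {G : AGame} {u : G.S → ℝ} {σ1 σ2 : AHist G → G.S → G.A → ℝ} {n : ℕ} {s : G.S}
  {h : AHist G} {f : G.S → ℝ}

lemma aExpH_succ_of_live (hs : G.Live s) :
    aExpH G u σ1 σ2 (n + 1) s h = u s + expectedPayoff (G.act1 s) (G.act2 s) (σ1 h s) (σ2 h s)
      fun a1 a2 => aExpH G u σ1 σ2 n (G.tr s a1 a2) (h ++ [(s, a1, a2)]) := by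
  rw [aExpH]
  exact if_pos hs

lemma aExpH_succ_of_not_live (hs : ¬ G.Live s) : aExpH G u σ1 σ2 (n + 1) s h = u s := by
  rw [aExpH]
  exact if_neg hs

lemma aExpH_const {τ1 τ2 : G.S → G.A → ℝ} :
    aExpH G u (fun _ => τ1) (fun _ => τ2) n s h = aExp G u τ1 τ2 n s := by
  induction n generalizing s h with
  | zero => rfl
  | succ n ih => simp only [aExpH, aExp, ih]

lemma aExpH_le_of_step_le (hG : G.Acyclic) (hσ1 : σ1 ∈ HStrat G G.act1)
    (hσ2 : σ2 ∈ HStrat G G.act2)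
    (hlive : ∀ h s, G.Live s → u s + expectedPayoff (G.act1 s) (G.act2 s) (σ1 h s) (σ2 h s)
      (fun a1 a2 => f (G.tr s a1 a2)) ≤ f s)
    (hdead : ∀ s, ¬ G.Live s → u s ≤ f s) (hn : G.rank s < n) : aExpH G u σ1 σ2 n s h ≤ f s := by
  induction n generalizing s h with
  | zero => omega
  | succ n ih =>
    by_cases hs : G.Live s
    · rw [aExpH_succ_of_live hs]
      refine le_trans (add_le_add_right (expectedPayoff_mono _ _ (hσ1 h s) (hσ2 h s)
        fun a1 h1 a2 h2 => ih ?_) _) (hlive h s hs)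
      have := AGame.rank_tr_lt hG h1 h2
      omega
    · rw [aExpH_succ_of_not_live hs]
      exact hdead s hs

lemma le_aExpH_of_le_step (hG : G.Acyclic) (hσ1 : σ1 ∈ HStrat G G.act1)
    (hσ2 : σ2 ∈ HStrat G G.act2)
    (hlive : ∀ h s, G.Live s → f s ≤ u s + expectedPayoff (G.act1 s) (G.act2 s) (σ1 h s)
      (σ2 h s) (fun a1 a2 => f (G.tr s a1 a2)))
    (hdead : ∀ s, ¬ G.Live s → f s ≤ u s) (hn : G.rank s < n) : f s ≤ aExpH G u σ1 σ2 n s h := by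
  induction n generalizing s h with
  | zero => omega
  | succ n ih =>
    by_cases hs : G.Live s
    · rw [aExpH_succ_of_live hs]
      refine le_trans (hlive h s hs) (add_le_add_right (expectedPayoff_mono _ _ (hσ1 h s)
        (hσ2 h s) fun a1 h1 a2 h2 => ih ?_) _)
      have := AGame.rank_tr_lt hG h1 h2
      omega
    · rw [aExpH_succ_of_not_live hs]
      exact hdead s hs

lemma neg_le_aExpH (hσ1 : σ1 ∈ HStrat G G.act1) (hσ2 : σ2 ∈ HStrat G G.act2) :
    -((n + 1) * ∑ t, |u t|) ≤ aExpH G u σ1 σ2 n s h := by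
  have hu : ∀ s, -∑ t, |u t| ≤ u s := fun s =>
    (neg_le_neg (single_le_sum (fun t _ => abs_nonneg (u t)) (mem_univ s))).trans (neg_abs_le _)
  have hB : 0 ≤ ∑ t, |u t| := sum_nonneg fun t _ => abs_nonneg (u t)
  induction n generalizing s h with
  | zero => simpa [aExpH] using hu s
  | succ n ih =>
    by_cases hs : G.Live s
    · rw [aExpH_succ_of_live hs]
      have := le_expectedPayoff _ _ (hσ1 h s) (hσ2 h s) hs.1 hs.2 fun a1 _ a2 _ =>
        ih (s := G.tr s a1 a2) (h := h ++ [(s, a1, a2)])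
      push_cast
      linarith [hu s]
    · rw [aExpH_succ_of_not_live hs]
      have : 0 ≤ (n + 1 : ℝ) * ∑ t, |u t| := by positivity
      push_cast
      linarith [hu s]

end HistoryDependentPayoff

-- The response depends on the history only through player 1's current row, so it is memoryless
-- against a memoryless strategy.
theorem exists_response_aExpH_le_value {G : AGame} (hG : G.Acyclic) (u : G.S → ℝ) :
    ∃ br : G.S → (G.A → ℝ) → G.A → ℝ, (∀ s ρ, IsDistOn (G.act2 s) (br s ρ)) ∧
      ∀ σ1 ∈ HStrat G G.act1, ∀ {n : ℕ} {s : G.S} (h : AHist G), G.rank s < n →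
        aExpH G u σ1 (fun h s => br s (σ1 h s)) n s h ≤ G.value u s := by
  choose br hbr hbr_eq using fun s ρ => exists_expectedPayoff_eq_securityLevel (G.act1 s)
    (G.act2 s) ρ fun a1 a2 => G.value u (G.tr s a1 a2)
  refine ⟨br, hbr, fun σ1 hσ1 n s h hn =>
    aExpH_le_of_step_le hG hσ1 (fun h s => hbr s _) (fun h s hs => ?_) (fun s hs => ?_) hn⟩
  · rw [hbr_eq s _ hs.2, AGame.value_eq_valueStep hG, AGame.valueStep, dif_pos hs]
    exact add_le_add_right (securityLevel_le_matrixGameValue _ _ hs.2 _ (hσ1 h s)) _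
  · rw [AGame.value_eq_valueStep hG, AGame.valueStep, dif_neg hs]

theorem exists_mStrat_value_le_aExpH {G : AGame} (hG : G.Acyclic) (u : G.S → ℝ) :
    ∃ σ1 ∈ MStrat G G.act1, ∀ σ2 ∈ HStrat G G.act2, ∀ {n : ℕ} {s : G.S} (h : AHist G),
      G.rank s < n → G.value u s ≤ aExpH G u (fun _ => σ1) σ2 n s h := by
  choose σ1 hσ1 hσ1_eq using fun s => exists_securityLevel_eq_matrixGameValue (G.act1 s)
    (G.act2 s) fun a1 a2 => G.value u (G.tr s a1 a2)
  refine ⟨σ1, hσ1, fun σ2 hσ2 n s h hn =>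
    le_aExpH_of_le_step hG (fun _ => hσ1) hσ2 (fun h s hs => ?_) (fun s hs => ?_) hn⟩
  · rw [AGame.value_eq_valueStep hG, AGame.valueStep, dif_pos hs, ← hσ1_eq s hs.2]
    exact add_le_add_right (securityLevel_le_expectedPayoff _ _ hs.2 (hσ2 h s)) _
  · rw [AGame.value_eq_valueStep hG, AGame.valueStep, dif_neg hs]

/-- In an acyclic finite concurrent game, memoryless mixed strategies suffice:
the value over history-dependent mixed strategies equals the value over
memoryless mixed strategies. -/
theorem memoryless_suffices (G : AGame) (hacyc : G.Acyclic) (u : G.S → ℝ) :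
    (⨆ σ1 : HStrat G G.act1, ⨅ σ2 : HStrat G G.act2,
        aExpH G u σ1.1 σ2.1 (Fintype.card G.S) G.s0 [])
      = ⨆ σ1 : MStrat G G.act1, ⨅ σ2 : MStrat G G.act2,
          aExp G u σ1.1 σ2.1 (Fintype.card G.S) G.s0 := by
  have hs0 := AGame.rank_lt_card hacyc G.s0
  obtain ⟨br, hbr, hbr_le⟩ := exists_response_aExpH_le_value hacyc u
  obtain ⟨σ, hσ, hσ_le⟩ := exists_mStrat_value_le_aExpH hacyc u
  simp_rw [← aExpH_const (h := [])]
  refine (ciSup_ciInf_eq_of_saddle (c := G.value u G.s0) ?_ ?_ ?_).trans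
    (ciSup_ciInf_eq_of_saddle ?_ ?_ ?_).symm
  · exact fun σ1 => ⟨_, Set.forall_mem_range.2 fun σ2 => neg_le_aExpH σ1.2 σ2.2⟩
  · exact fun σ1 => ⟨⟨_, fun h s => hbr s _⟩, hbr_le σ1.1 σ1.2 [] hs0⟩
  · exact ⟨⟨_, fun _ => hσ⟩, fun σ2 => hσ_le σ2.1 σ2.2 [] hs0⟩
  · exact fun σ1 => ⟨_, Set.forall_mem_range.2 fun σ2 =>
      neg_le_aExpH (fun _ => σ1.2) (fun _ => σ2.2)⟩
  · exact fun σ1 => ⟨⟨_, fun s => hbr s (σ1.1 s)⟩, hbr_le _ (fun _ => σ1.2) [] hs0⟩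
  · exact ⟨⟨σ, hσ⟩, fun σ2 => hσ_le _ (fun _ => σ2.2) [] hs0⟩
end

section
/- Quantitative bound between lower and upper abstraction values: let (G, u) be a finite concurrent game, Π a compatible partition, and suppose that for every class π ∈ Π, max_{s∈π} u(s) − min_{s∈π} u(s) ≤ ε. Then for every horizon L: υ_{2L}(G↑, u↑) − υ_{2L}(G↑, u↓) ≤ L·ε, where (G↑, u↑) is the upper abstraction and u↓ is the lower utility on the same game structure G↑. -/
open scoped BigOperators

/-!
On the upper abstraction, class states and dummy states alternate along every play, and the
gap `u↑ - u↓` is at most `ε` on classes and `0` on dummy states. Expected cumulative utility is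
linear in the utility, so for every strategy profile the expected gap over `2L` steps is at most
`L·ε`; this pointwise bound passes to the sup–inf values once the expected utilities are known
to be bounded uniformly in the strategies.
-/

section Averaging

open Finset

variable {ι κ : Type*} {s : Finset ι} {t : Finset κ} {p : ι → ℝ} {q : κ → ℝ}

lemma sum_sum_mul_mul_le (hp : ∀ i ∈ s, 0 ≤ p i) (hq : ∀ j ∈ t, 0 ≤ q j)
    (hp1 : ∑ i ∈ s, p i = 1) (hq1 : ∑ j ∈ t, q j = 1) {f : ι → κ → ℝ} {c : ℝ}
    (hf : ∀ i ∈ s, ∀ j ∈ t, f i j ≤ c) :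
    ∑ i ∈ s, ∑ j ∈ t, p i * q j * f i j ≤ c :=
  calc ∑ i ∈ s, ∑ j ∈ t, p i * q j * f i j
      ≤ ∑ i ∈ s, ∑ j ∈ t, p i * q j * c := by
        gcongr with i hi j hj
        · exact mul_nonneg (hp i hi) (hq j hj)
        · exact hf i hi j hj
    _ = c := by simp only [← sum_mul, ← sum_mul_sum, hp1, hq1, one_mul]

lemma abs_sum_sum_mul_mul_le (hp : ∀ i ∈ s, 0 ≤ p i) (hq : ∀ j ∈ t, 0 ≤ q j)
    (hp1 : ∑ i ∈ s, p i = 1) (hq1 : ∑ j ∈ t, q j = 1) {f : ι → κ → ℝ} {c : ℝ}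
    (hf : ∀ i ∈ s, ∀ j ∈ t, |f i j| ≤ c) :
    |∑ i ∈ s, ∑ j ∈ t, p i * q j * f i j| ≤ c :=
  calc |∑ i ∈ s, ∑ j ∈ t, p i * q j * f i j|
      ≤ ∑ i ∈ s, ∑ j ∈ t, |p i * q j * f i j| :=
        (abs_sum_le_sum_abs _ _).trans (sum_le_sum fun _ _ => abs_sum_le_sum_abs _ _)
    _ = ∑ i ∈ s, ∑ j ∈ t, p i * q j * |f i j| :=
        sum_congr rfl fun i hi => sum_congr rfl fun j hj => by
          rw [abs_mul, abs_of_nonneg (mul_nonneg (hp i hi) (hq j hj))]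
    _ ≤ c := sum_sum_mul_mul_le hp hq hp1 hq1 hf

end Averaging

lemma ciSup_ciInf_le_ciSup_ciInf_add {α β : Type*} [Nonempty α] [Nonempty β]
    {F H : α → β → ℝ} {M C : ℝ} (hF : ∀ a b, |F a b| ≤ M) (hH : ∀ a b, |H a b| ≤ M)
    (hFH : ∀ a b, F a b ≤ H a b + C) :
    ⨆ a, ⨅ b, F a b ≤ (⨆ a, ⨅ b, H a b) + C := by
  have bdd_below (K : α → β → ℝ) (hK : ∀ a b, |K a b| ≤ M) (a : α) :
      BddBelow (Set.range (K a)) :=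
    ⟨-M, by rintro _ ⟨b, rfl⟩; exact neg_le_of_abs_le (hK a b)⟩
  have bdd_above : BddAbove (Set.range fun a => ⨅ b, H a b) :=
    ⟨M, by
      rintro _ ⟨a, rfl⟩
      exact (ciInf_le (bdd_below H hH a) (Classical.arbitrary β)).trans (le_of_abs_le (hH a _))⟩
  refine ciSup_le fun a => ?_
  calc ⨅ b, F a b ≤ (⨅ b, H a b) + C :=
        sub_le_iff_le_add.1 <| le_ciInf fun b =>
          sub_le_iff_le_add.2 <| (ciInf_le (bdd_below F hF a) b).trans (hFH a b)
    _ ≤ (⨆ a, ⨅ b, H a b) + C := by gcongr; exact le_ciSup bdd_above a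

namespace ConcGame

variable (G : ConcGame)

lemma strat_nonempty {act : G.S → Finset G.A} (hact : ∀ s, (act s).Nonempty) :
    (Strat G act).Nonempty := by
  classical
  choose a ha using hact
  refine ⟨fun _ s b => if b = a s then 1 else 0, fun _ s => ⟨?_, ?_, ?_⟩⟩
  · intro b
    dsimp only
    split_ifs <;> norm_num
  · simp [ha s]
  · intro b hb
    simp [show b ≠ a s from fun e => hb (e ▸ ha s)]

variable {G} {σ1 σ2 : Hist G → G.S → G.A → ℝ}

lemma expVal_sub (u v : G.S → ℝ) (n : ℕ) (s : G.S) (h : Hist G) :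
    expVal G (u - v) σ1 σ2 n s h = expVal G u σ1 σ2 n s h - expVal G v σ1 σ2 n s h := by
  induction n generalizing s h with
  | zero => simp [expVal]
  | succ n ih =>
    simp only [expVal, ih, Pi.sub_apply, mul_sub, Finset.sum_sub_distrib]
    ring

lemma abs_expVal_le (hσ1 : σ1 ∈ Strat G G.act1) (hσ2 : σ2 ∈ Strat G G.act2)
    {u : G.S → ℝ} {M : ℝ} (hM : ∀ s, |u s| ≤ M) (n : ℕ) (s : G.S) (h : Hist G) : |expVal G u σ1 σ2 n s h| ≤ n * M := by
  induction n generalizing s h with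
  | zero => simp [expVal]
  | succ n ih =>
    calc |expVal G u σ1 σ2 (n + 1) s h|
        ≤ |u s| + |∑ a1 ∈ G.act1 s, ∑ a2 ∈ G.act2 s, σ1 h s a1 * σ2 h s a2 *
            expVal G u σ1 σ2 n (G.tr s a1 a2) (h ++ [(s, a1, a2)])| := abs_add_le _ _
      _ ≤ M + n * M := by
        gcongr
        · exact hM s
        · exact abs_sum_sum_mul_mul_le (fun a _ => (hσ1 h s).1 a) (fun a _ => (hσ2 h s).1 a)
            (hσ1 h s).2.1 (hσ2 h s).2.1 fun _ _ _ _ => ih _ _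
      _ = (n + 1 : ℕ) * M := by push_cast; ring

/-- If the states of `P` are never visited twice in a row, an `n`-step play visits `P`
at most `⌈n/2⌉ = (n + 1) / 2` times, and at most `⌊n/2⌋` times when it starts outside `P`. -/
lemma expVal_le_of_no_consecutive (hσ1 : σ1 ∈ Strat G G.act1) (hσ2 : σ2 ∈ Strat G G.act2)
    {w : G.S → ℝ} {P : Set G.S} {ε : ℝ} (hε : 0 ≤ ε)
    (hwP : ∀ s ∈ P, w s ≤ ε) (hwPc : ∀ s ∉ P, w s ≤ 0)
    (hP : ∀ s ∈ P, ∀ a1 ∈ G.act1 s, ∀ a2 ∈ G.act2 s, G.tr s a1 a2 ∉ P)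
    (n : ℕ) (s : G.S) (h : Hist G) :
    expVal G w σ1 σ2 n s h ≤ ((n + 1) / 2 : ℕ) * ε ∧
      (s ∉ P → expVal G w σ1 σ2 n s h ≤ (n / 2 : ℕ) * ε) := by
  induction n generalizing s h with
  | zero => simp [expVal]
  | succ n ih =>
    have step {c : ℝ} (hc : ∀ a1 ∈ G.act1 s, ∀ a2 ∈ G.act2 s,
        expVal G w σ1 σ2 n (G.tr s a1 a2) (h ++ [(s, a1, a2)]) ≤ c) :
        expVal G w σ1 σ2 (n + 1) s h ≤ w s + c :=
      (add_le_add_iff_left _).2 (sum_sum_mul_mul_le (fun a _ => (hσ1 h s).1 a)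
        (fun a _ => (hσ2 h s).1 a) (hσ1 h s).2.1 (hσ2 h s).2.1 hc)
    have hmono : ((n + 1) / 2 : ℕ) * ε ≤ ((n + 1 + 1) / 2 : ℕ) * ε := by
      gcongr; omega
    by_cases hs : s ∈ P
    · have hval := step fun a1 ha1 a2 ha2 => (ih _ _).2 (hP s hs a1 ha1 a2 ha2)
      refine ⟨hval.trans ?_, fun hs' => absurd hs hs'⟩
      have : (n + 1 + 1) / 2 = n / 2 + 1 := by omega
      rw [this, Nat.cast_succ]
      linarith [hwP s hs]
    · have hval := step fun _ _ _ _ => (ih _ _).1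
      have hval' : expVal G w σ1 σ2 (n + 1) s h ≤ ((n + 1) / 2 : ℕ) * ε := by
        linarith [hwPc s hs]
      exact ⟨hval'.trans hmono, fun _ => hval'⟩

end ConcGame

lemma valFrom_sub_le (G : ConcGame) {u v : G.S → ℝ} {n : ℕ} {s : G.S} {C : ℝ}
    (h : ∀ σ1 ∈ Strat G G.act1, ∀ σ2 ∈ Strat G G.act2,
      expVal G u σ1 σ2 n s [] - expVal G v σ1 σ2 n s [] ≤ C) :
    valFrom G u n s - valFrom G v n s ≤ C := by
  have := (G.strat_nonempty G.h1).to_subtype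
  have := (G.strat_nonempty G.h2).to_subtype
  obtain ⟨M, hM⟩ := Finite.exists_le fun s => max |u s| |v s|
  exact sub_le_iff_le_add'.2 <| ciSup_ciInf_le_ciSup_ciInf_add
    (fun σ1 σ2 => G.abs_expVal_le σ1.2 σ2.2 (fun s => (le_max_left _ _).trans (hM s)) n s [])
    (fun σ1 σ2 => G.abs_expVal_le σ1.2 σ2.2 (fun s => (le_max_right _ _).trans (hM s)) n s [])
    fun σ1 σ2 => sub_le_iff_le_add'.1 (h σ1.1 σ1.2 σ2.1 σ2.2)

section UpperAbstraction

variable (G : ConcGame) (r : Setoid G.S)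

lemma upperAbs_tr_inl_notMem (q : Quotient r) {a1 a2 : (upperAbs G r).A}
    (ha1 : a1 ∈ (upperAbs G r).act1 (Sum.inl q)) (ha2 : a2 ∈ (upperAbs G r).act2 (Sum.inl q)) :
    (upperAbs G r).tr (Sum.inl q) a1 a2 ∉ Set.range Sum.inl := by
  obtain ⟨b1, -, rfl⟩ := Finset.mem_image.mp ha1
  obtain ⟨b2, -, rfl⟩ := Finset.mem_image.mp ha2
  rintro ⟨_, ⟨⟩⟩

lemma sInf_le_sSup_image_classOf (u : G.S → ℝ) (q : Quotient r) :
    sInf (u '' classOf G r q) ≤ sSup (u '' classOf G r q) := by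
  have hfin : (u '' classOf G r q).Finite := (Set.toFinite _).image u
  obtain ⟨s, rfl⟩ := Quotient.exists_rep q
  exact csInf_le_csSup ⟨u s, s, rfl, rfl⟩ hfin.bddBelow hfin.bddAbove

end UpperAbstraction

theorem abstraction_value_gap_general (G : ConcGame) (u : G.S → ℝ) (r : Setoid G.S)
    (ε : ℝ)
    (hε : ∀ q : Quotient r,
      sSup (u '' classOf G r q) - sInf (u '' classOf G r q) ≤ ε) (L : ℕ) :
    gval (upperAbs G r) (upperU G r u) (2 * L)
      - gval (upperAbs G r) (lowerU G r u) (2 * L) ≤ L * ε := by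
  have hε0 : 0 ≤ ε :=
    sub_nonneg.2 (sInf_le_sSup_image_classOf G r u (Quotient.mk r G.s0)) |>.trans (hε _)
  refine valFrom_sub_le _ fun σ1 hσ1 σ2 hσ2 => ?_
  refine (ConcGame.expVal_sub _ _ _ _ _).symm.trans_le ?_
  refine ((upperAbs G r).expVal_le_of_no_consecutive hσ1 hσ2 hε0 (P := Set.range Sum.inl)
    ?_ ?_ ?_ (2 * L) _ []).1.trans_eq ?_
  · rintro _ ⟨q, rfl⟩
    exact hε q
  · rintro (q | d) hd
    exacts [absurd ⟨q, rfl⟩ hd, (sub_self (0 : ℝ)).le]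
  · rintro _ ⟨q, rfl⟩ a1 ha1 a2 ha2
    exact upperAbs_tr_inl_notMem G r q ha1 ha2
  · rw [show (2 * L + 1) / 2 = L by omega]

/-- Quantitative bound between upper and lower utilities on the upper abstraction:
if within every partition class the utility `u` varies by at most `ε`, then the
`2L`-step values of the upper abstraction structure under the upper and lower
abstract utilities differ by at most `L·ε`. -/
theorem abstraction_value_gap (G : ConcGame) (u : G.S → ℝ) (r : Setoid G.S)
    (hc : Compatible G r) (ε : ℝ)
    (hε : ∀ q : Quotient r,
      sSup (u '' classOf G r q) - sInf (u '' classOf G r q) ≤ ε) (L : ℕ) :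
    gval (upperAbs G r) (upperU G r u) (2 * L)
      - gval (upperAbs G r) (lowerU G r u) (2 * L) ≤ L * ε :=
  abstraction_value_gap_general G u r ε hε L
end
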